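/- arXiv:0809.4733 — 6 statements merged into one kernel-verified Lean document; each statement's English description precedes it below -/
import Mathlib

section
/- Let X be a completely regular T1 space with a family Φ ⊆ C(X) that is generating* with respect to a set M of continuous operations (i.e., every bounded continuous real-valued function on X can be written as a composition of functions from Φ, M, and C(ℝ)). Then the evaluation map e : X → ℝ^Φ defined by e(x) = (Φ(x))_{Φ∈Φ} is a topological embedding. -/
open Set

/-- A real-valued function is bounded. -/
def BddFun {X : Type*} (f : X → ℝ) : Prop := ∃ C : ℝ, ∀ x, |f x| ≤ C

/-- A set of continuous operations on Euclidean spaces (of various arities). -/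
abbrev OpFamily := Set ((n : ℕ) × C((Fin n → ℝ), ℝ))

/-- The functions obtainable as finite compositions of members of `Φ`,
members of `M`, and continuous functions `ℝ → ℝ`. -/
inductive Generated {X : Type*} [TopologicalSpace X]
    (Φ : Set C(X, ℝ)) (M : OpFamily) : (X → ℝ) → Prop
  | base (φ : C(X, ℝ)) (hφ : φ ∈ Φ) : Generated Φ M φ
  | post (g : C(ℝ, ℝ)) (f : X → ℝ) (hf : Generated Φ M f) :
      Generated Φ M (fun x => g (f x))
  | op (p : (n : ℕ) × C((Fin n → ℝ), ℝ)) (hp : p ∈ M)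
      (f : Fin p.1 → X → ℝ) (hf : ∀ i, Generated Φ M (f i)) :
      Generated Φ M (fun x => p.2 (fun i => f i x))

/-- `Φ` is generating* with respect to `M`: every bounded continuous real-valued
function on `X` is a composition of members of `Φ`, `M` and `C(ℝ)`. -/
def IsGeneratingStar {X : Type*} [TopologicalSpace X]
    (Φ : Set C(X, ℝ)) (M : OpFamily) : Prop :=
  ∀ f : C(X, ℝ), BddFun (f : X → ℝ) → Generated Φ M (f : X → ℝ)

/-- Generated functions only depend on the values of the members of `Φ`. -/
lemma Generated.eq_of_eval {X : Type*} [TopologicalSpace X] {Φ : Set C(X, ℝ)} {M : OpFamily}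
    {f : X → ℝ} (hf : Generated Φ M f) {x y : X}
    (h : ∀ φ : Φ, (φ : C(X, ℝ)) x = (φ : C(X, ℝ)) y) : f x = f y := by
  induction hf with
  | base φ hφ => exact h ⟨φ, hφ⟩
  | post g f hf ih => simp [ih]
  | op p hp f hf ih => simp only; congr 1; funext i; exact ih i

/-- Generated functions are continuous w.r.t. the topology induced by the evaluation map. -/
lemma Generated.continuous_induced {X : Type*} [TopologicalSpace X] {Φ : Set C(X, ℝ)}
    {M : OpFamily} {f : X → ℝ} (hf : Generated Φ M f) :
    @Continuous X ℝ (TopologicalSpace.induced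
      (fun x : X => (fun φ : Φ => φ.1 x)) inferInstance) _ f := by
  letI t' : TopologicalSpace X := TopologicalSpace.induced
      (fun x : X => (fun φ : Φ => φ.1 x)) inferInstance
  have he : @Continuous X (Φ → ℝ) t' _ (fun x : X => (fun φ : Φ => φ.1 x)) :=
    continuous_induced_dom
  induction hf with
  | base φ hφ =>
      exact (continuous_apply (⟨φ, hφ⟩ : Φ)).comp he
  | post g f hf ih => exact g.continuous.comp ih
  | op p hp f hf ih => exact p.2.continuous.comp (continuous_pi ih)

/-- The evaluation map of a generating* family on a completely regular T1 space
is a topological embedding. -/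
theorem stmt0 {X : Type*} [TopologicalSpace X] [T1Space X] [CompletelyRegularSpace X]
    (Φ : Set C(X, ℝ)) (M : OpFamily) (hΦ : IsGeneratingStar Φ M) :
    Topology.IsEmbedding (fun x : X => (fun φ : Φ => (φ : C(X, ℝ)) x)) := by
  set e : X → (Φ → ℝ) := fun x => (fun φ : Φ => (φ : C(X, ℝ)) x) with he_def
  -- a helper producing generated bounded functions separating points from closed sets
  have sep : ∀ (x : X) (K : Set X), IsClosed K → x ∉ K →
      ∃ f : X → ℝ, Generated Φ M f ∧ f x = 0 ∧ (∀ y ∈ K, f y = 1) := by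
    intro x K hK hxK
    obtain ⟨f, hf, hf0, hf1⟩ := CompletelyRegularSpace.completely_regular x K hK hxK
    refine ⟨fun y => (f y : ℝ), ?_, by simp [hf0], fun y hy => by simp [hf1 hy]⟩
    refine hΦ ⟨fun y => (f y : ℝ), continuous_subtype_val.comp hf⟩ ⟨1, fun y => ?_⟩
    have h0 := (f y).2.1
    have h1 := (f y).2.2
    rw [abs_le]; constructor <;> simp only [ContinuousMap.coe_mk] <;> linarith
  have hinj : Function.Injective e := by
    intro x y hxy
    by_contra hne
    obtain ⟨f, hf, hf0, hf1⟩ := sep x {y} isClosed_singleton (by simpa using hne)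
    have : f x = f y := hf.eq_of_eval (fun φ => congrFun hxy φ)
    rw [hf0, hf1 y rfl] at this
    norm_num at this
  have hcont : Continuous e := by
    exact continuous_pi (fun φ => (φ : C(X, ℝ)).continuous)
  rw [Topology.isEmbedding_iff]
  refine ⟨Topology.isInducing_iff_nhds.mpr fun x => le_antisymm ?_ ?_, hinj⟩
  · exact hcont.continuousAt.le_comap
  · intro U hU
    obtain ⟨U', hU'U, hU'o, hxU'⟩ := mem_nhds_iff.mp hU
    obtain ⟨f, hf, hf0, hf1⟩ := sep x U'ᶜ hU'o.isClosed_compl (by simp [hxU'])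
    have hfc := hf.continuous_induced
    have hopen : @IsOpen X (TopologicalSpace.induced e inferInstance) (f ⁻¹' (Iio (1/2))) :=
      @Continuous.isOpen_preimage X ℝ (TopologicalSpace.induced e inferInstance) _ f hfc
        (Iio (1/2)) isOpen_Iio
    obtain ⟨W, hWo, hWe⟩ := isOpen_induced_iff.mp hopen
    refine Filter.mem_of_superset (Filter.preimage_mem_comap (hWo.mem_nhds ?_)) ?_
    · have : x ∈ e ⁻¹' W := by rw [hWe]; simp [hf0]
      exact this
    · rw [hWe]
      intro y hy
      by_contra hyU
      have h1 : y ∉ U' := fun h => hyU (hU'U h)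
      have := hf1 y h1
      simp [this, Set.mem_preimage] at hy
      norm_num at hy
end

section
/- A T1 completely regular space with a finite generating* family (with respect to some set of operations) has finite covering dimension; more precisely, if the family has n elements then dim X ≤ n. -/
open Set

/-- Covering dimension at most `n`: every open cover has an open refinement
covering `X` in which each point lies in at most `n + 1` members. -/
def CovDimLE (X : Type*) [TopologicalSpace X] (n : ℕ) : Prop :=
  ∀ 𝒞 : Set (Set X), (∀ U ∈ 𝒞, IsOpen U) → ⋃₀ 𝒞 = Set.univ →
    ∃ 𝒱 : Set (Set X), (∀ V ∈ 𝒱, IsOpen V) ∧ ⋃₀ 𝒱 = Set.univ ∧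
      (∀ V ∈ 𝒱, ∃ U ∈ 𝒞, V ⊆ U) ∧
      ∀ x : X, {V ∈ 𝒱 | x ∈ V}.Finite ∧ {V ∈ 𝒱 | x ∈ V}.ncard ≤ n + 1

namespace DimMain


variable {n : ℕ}

/-- scale length -/
noncomputable def Lm (m : ℕ) : ℝ := (1/4 : ℝ) ^ m

lemma Lm_pos (m : ℕ) : 0 < Lm m := by unfold Lm; positivity

lemma Lm_succ (m : ℕ) : Lm (m+1) = Lm m / 4 := by
  simp [Lm, pow_succ]; ring

lemma Lm_zero : Lm 0 = 1 := by simp [Lm]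

lemma Lm_le_one (m : ℕ) : Lm m ≤ 1 := by
  simpa [Lm] using pow_le_one₀ (by norm_num : (0:ℝ) ≤ 1/4) (by norm_num : (1/4:ℝ) ≤ 1)

lemma Lm_big {m' m : ℕ} (h : m' + 2 ≤ m) : 16 * Lm m ≤ Lm m' := by
  have h1 : Lm m ≤ Lm (m' + 2) := by
    apply pow_le_pow_of_le_one (by norm_num) (by norm_num) h
  have : Lm (m' + 2) = Lm m' / 16 := by
    simp [Lm, pow_succ, pow_add]; ring
  rw [this] at h1; linarith

/-- cell margin -/
noncomputable def del (n m : ℕ) : ℝ := Lm m / (16 * (n+1))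

lemma del_pos (n m : ℕ) : 0 < del n m := by
  have := Lm_pos m; unfold del; positivity

lemma del_succ (n m : ℕ) : del n (m+1) = del n m / 4 := by
  unfold del; rw [Lm_succ]; ring

/-- grid shifts accumulator -/
noncomputable def cc (n m : ℕ) : ℝ := ∑ k ∈ Finset.range m, Lm (k+1) / (2*(n+1))

lemma cc_succ (n m : ℕ) : cc n (m+1) = cc n m + Lm (m+1) / (2*(n+1)) := by
  unfold cc; rw [Finset.sum_range_succ]

/-- grid offset for colour `j`, scale `m` -/
noncomputable def sig (n j m : ℕ) : ℝ := j * Lm m / (n+1) + cc n m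



lemma int_abs_helper {q r : ℝ} (hq : 0 < q) (num : ℤ) (hnum : num ≠ 0)
    (hr : r = num * q) : q ≤ |r| := by
  rw [hr, abs_mul, abs_of_pos hq]
  have h1 : (1:ℝ) ≤ |(num:ℝ)| := by
    rw [← Int.cast_abs]
    exact_mod_cast Int.one_le_abs hnum
  nlinarith

/-- same-scale separation of different colour grids -/
lemma sepFF {n j j' : ℕ} (m : ℕ) (hj : j ≤ n) (hj' : j' ≤ n) (hne : j ≠ j')
    (z z' : ℤ) :
    Lm m / (n+1) ≤ |(sig n j m + z * Lm m) - (sig n j' m + z' * Lm m)| := by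
  have hq : (0:ℝ) < Lm m / (n+1) := by
    have := Lm_pos m; positivity
  apply int_abs_helper hq ((j:ℤ) - j' + (n+1) * (z - z'))
  · intro h0
    rcases eq_or_ne (z - z') 0 with hz | hz
    · rw [hz] at h0; simp at h0; omega
    · have h1 : ((n:ℤ)+1) * |z - z'| ≥ (n:ℤ)+1 := by
        have : (1:ℤ) ≤ |z - z'| := Int.one_le_abs hz
        nlinarith [Int.ofNat_nonneg n]
      have h2 : |(j:ℤ) - j'| = ((n:ℤ)+1) * |z - z'| := by
        have : (j:ℤ) - j' = -(((n:ℤ)+1) * (z - z')) := by linarith [h0]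
        rw [this, abs_neg, abs_mul, abs_of_pos (by positivity : (0:ℤ) < (n:ℤ)+1)]
      have h3 : |(j:ℤ) - j'| ≤ n := by
        rw [abs_le]; omega
      omega
  · unfold sig
    push_cast
    field_simp
    ring

/-- fine (scale m+1) vs coarse (scale m) separation, any colours -/
lemma sepFC {n j j' : ℕ} (m : ℕ) (z z' : ℤ) :
    Lm (m+1) / (2*(n+1)) ≤
      |(sig n j (m+1) + z * Lm (m+1)) - (sig n j' m + z' * Lm m)| := by
  have hq : (0:ℝ) < Lm (m+1) / (2*(n+1)) := by
    have := Lm_pos (m+1); positivity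
  apply int_abs_helper hq (2*(j:ℤ) + 1 - 8*j' + 2*((n:ℤ)+1) * (z - 4*z'))
  · intro h0
    have hw : 2*((j:ℤ) - 4*j' + ((n:ℤ)+1) * (z - 4*z')) + 1 = 0 := by linarith [h0, (by ring : 2*((j:ℤ) - 4*j' + ((n:ℤ)+1) * (z - 4*z')) + 1 = 2*(j:ℤ) + 1 - 8*j' + 2*((n:ℤ)+1) * (z - 4*z'))]
    omega
  · have hL : Lm m = 4 * Lm (m+1) := by rw [Lm_succ]; ring
    unfold sig
    rw [cc_succ, hL]
    push_cast
    field_simp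
    ring



/-- the Lebesgue-number function of a family of opens -/
noncomputable def fl (C : Set (Set (Fin n → ℝ))) (x : Fin n → ℝ) : ℝ :=
  sSup {r : ℝ | r ≤ 8 ∧ ∃ U ∈ C, Metric.ball x r ⊆ U}

lemma fl_bddAbove (C : Set (Set (Fin n → ℝ))) (x : Fin n → ℝ) :
    BddAbove {r : ℝ | r ≤ 8 ∧ ∃ U ∈ C, Metric.ball x r ⊆ U} :=
  ⟨8, fun r hr => hr.1⟩

lemma fl_le8 (C : Set (Set (Fin n → ℝ))) (x : Fin n → ℝ) : fl C x ≤ 8 := by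
  unfold fl
  rcases eq_or_ne {r : ℝ | r ≤ 8 ∧ ∃ U ∈ C, Metric.ball x r ⊆ U} ∅ with h | h
  · rw [h, Real.sSup_empty]; norm_num
  · exact csSup_le (nonempty_iff_ne_empty.2 h) fun r hr => hr.1

lemma fl_pos (C : Set (Set (Fin n → ℝ))) {x : Fin n → ℝ} {W : Set (Fin n → ℝ)}
    (hW : W ∈ C) (hWo : IsOpen W) (hx : x ∈ W) : 0 < fl C x := by
  obtain ⟨ε, hε, hball⟩ := Metric.isOpen_iff.1 hWo x hx
  have hmem : min ε 1 ∈ {r : ℝ | r ≤ 8 ∧ ∃ U ∈ C, Metric.ball x r ⊆ U} := by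
    refine ⟨by simpa using (min_le_right ε 1).trans (by norm_num), W, hW, ?_⟩
    exact (Metric.ball_subset_ball (min_le_left ε 1)).trans hball
  have := le_csSup (fl_bddAbove C x) hmem
  have h1 : 0 < min ε 1 := lt_min hε one_pos
  exact h1.trans_le this

lemma fl_lip (C : Set (Set (Fin n → ℝ))) (x y : Fin n → ℝ) :
    fl C x ≤ fl C y + dist x y := by
  unfold fl
  rcases eq_or_ne {r : ℝ | r ≤ 8 ∧ ∃ U ∈ C, Metric.ball x r ⊆ U} ∅ with h | h
  · rw [h, Real.sSup_empty]
    rcases eq_or_ne {r : ℝ | r ≤ 8 ∧ ∃ U ∈ C, Metric.ball y r ⊆ U} ∅ with h' | h'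
    · rw [h', Real.sSup_empty]; positivity
    · obtain ⟨r, hr⟩ := nonempty_iff_ne_empty.2 h'
      have h0 : (0:ℝ) ∈ {r : ℝ | r ≤ 8 ∧ ∃ U ∈ C, Metric.ball y r ⊆ U} := by
        obtain ⟨U, hU, _⟩ := hr.2
        exact ⟨by norm_num, U, hU, by simp⟩
      have := le_csSup (fl_bddAbove C y) h0
      have := dist_nonneg (x := x) (y := y)
      linarith
  · apply csSup_le (nonempty_iff_ne_empty.2 h)
    intro r hr
    obtain ⟨hr8, U, hU, hball⟩ := hr
    have hmem : r - dist x y ∈ {r : ℝ | r ≤ 8 ∧ ∃ U ∈ C, Metric.ball y r ⊆ U} := by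
      refine ⟨by have := dist_nonneg (x := x) (y := y); linarith, U, hU, ?_⟩
      intro z hz
      apply hball
      rw [Metric.mem_ball] at hz ⊢
      have := dist_triangle z y x
      rw [dist_comm x y] at *
      linarith
    have := le_csSup (fl_bddAbove C y) hmem
    linarith

lemma fl_ball (C : Set (Set (Fin n → ℝ))) {y : Fin n → ℝ} {L : ℝ} (hL : 0 < L)
    (h : 2 * L ≤ fl C y) : ∃ U ∈ C, Metric.ball y (3/2 * L) ⊆ U := by
  have hne : {r : ℝ | r ≤ 8 ∧ ∃ U ∈ C, Metric.ball y r ⊆ U}.Nonempty := by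
    rw [nonempty_iff_ne_empty]
    intro h0
    rw [fl, h0, Real.sSup_empty] at h; linarith
  obtain ⟨r, hr, hlt⟩ := exists_lt_of_lt_csSup hne (show 3/2 * L < fl C y by unfold fl at h ⊢; linarith)
  obtain ⟨_, U, hU, hball⟩ := hr
  exact ⟨U, hU, (Metric.ball_subset_ball hlt.le).trans hball⟩


variable {n : ℕ}


/-- the cube of colour j, scale m containing x -/
noncomputable def kOf (n j m : ℕ) (x : Fin n → ℝ) : Fin n → ℤ :=
  fun i => ⌊(x i - sig n j m) / Lm m⌋

lemma kOf_le (n j m : ℕ) (x : Fin n → ℝ) (i : Fin n) :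
    sig n j m + kOf n j m x i * Lm m ≤ x i := by
  have h := Int.floor_le ((x i - sig n j m) / Lm m)
  have hL := Lm_pos m
  rw [kOf]
  have h2 := mul_le_mul_of_nonneg_right h hL.le
  rw [div_mul_cancel₀ _ hL.ne'] at h2
  linarith

lemma kOf_lt (n j m : ℕ) (x : Fin n → ℝ) (i : Fin n) :
    x i < sig n j m + (kOf n j m x i + 1) * Lm m := by
  have h := Int.lt_floor_add_one ((x i - sig n j m) / Lm m)
  have hL := Lm_pos m
  rw [kOf]
  have h2 := mul_lt_mul_of_pos_right h hL
  rw [div_mul_cancel₀ _ hL.ne'] at h2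
  linarith

/-- closed cube -/
def ccube (n j m : ℕ) (k : Fin n → ℤ) : Set (Fin n → ℝ) :=
  {x | ∀ i, sig n j m + k i * Lm m ≤ x i ∧ x i ≤ sig n j m + (k i + 1) * Lm m}

/-- the open "final" cell: margin δ/2 -/
def fnl (n j m : ℕ) (k : Fin n → ℤ) : Set (Fin n → ℝ) :=
  {x | ∀ i, sig n j m + k i * Lm m + del n m / 2 < x i ∧
        x i < sig n j m + (k i + 1) * Lm m - del n m / 2}

/-- the closed "subtracted" cell: margin δ/4 -/
def subt (n j m : ℕ) (k : Fin n → ℤ) : Set (Fin n → ℝ) :=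
  {x | ∀ i, sig n j m + k i * Lm m + del n m / 4 ≤ x i ∧
        x i ≤ sig n j m + (k i + 1) * Lm m - del n m / 4}

/-- geometric core: margin 2δ -/
def corG (n j m : ℕ) (k : Fin n → ℤ) : Set (Fin n → ℝ) :=
  {x | ∀ i, sig n j m + k i * Lm m + 2 * del n m ≤ x i ∧
        x i ≤ sig n j m + (k i + 1) * Lm m - 2 * del n m}

lemma corG_subset_fnl (n j m : ℕ) (k : Fin n → ℤ) : corG n j m k ⊆ fnl n j m k := by
  intro x hx i
  have h := hx i
  have hd := del_pos n m
  constructor <;> [linarith [h.1]; linarith [h.2]]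

lemma fnl_subset_subt (n j m : ℕ) (k : Fin n → ℤ) : fnl n j m k ⊆ subt n j m k := by
  intro x hx i
  have h := hx i
  have hd := del_pos n m
  constructor <;> [linarith [h.1]; linarith [h.2]]

lemma subt_subset_ccube (n j m : ℕ) (k : Fin n → ℤ) : subt n j m k ⊆ ccube n j m k := by
  intro x hx i
  have h := hx i
  have hd := del_pos n m
  constructor <;> [linarith [h.1]; linarith [h.2]]

lemma ccube_diam {n j m : ℕ} {k : Fin n → ℤ} {x y : Fin n → ℝ}
    (hx : x ∈ ccube n j m k) (hy : y ∈ ccube n j m k) : dist x y ≤ Lm m := by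
  rw [dist_pi_le_iff (Lm_pos m).le]
  intro i
  have h1 := hx i; have h2 := hy i
  rw [Real.dist_eq, abs_le]
  constructor <;> nlinarith [h1.1, h1.2, h2.1, h2.2]

/-- membership in subt forces the cube index -/
lemma subt_kOf {n j m : ℕ} {k : Fin n → ℤ} {x : Fin n → ℝ}
    (hx : x ∈ subt n j m k) : k = kOf n j m x := by
  funext i
  have h := hx i
  have hL := Lm_pos m
  have hd := del_pos n m
  have h1 : (k i : ℝ) ≤ (x i - sig n j m) / Lm m := by
    rw [le_div_iff₀ hL]; linarith [h.1]
  have h2 : (x i - sig n j m) / Lm m < k i + 1 := by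
    rw [div_lt_iff₀ hL]; nlinarith [h.2]
  have := Int.floor_eq_iff.2 ⟨h1, by exact_mod_cast h2⟩
  rw [kOf, ← this]

/-- the "far from grid" predicate at threshold θ -/
def farr (n j m : ℕ) (θ : ℝ) (x : Fin n → ℝ) : Prop :=
  ∀ i, ∀ z : ℤ, θ < |x i - sig n j m - z * Lm m|

lemma farr_corG {n j m : ℕ} {x : Fin n → ℝ} (h : farr n j m (2 * del n m) x) :
    x ∈ corG n j m (kOf n j m x) := by
  intro i
  have h1 := kOf_le n j m x i
  have h2 := kOf_lt n j m x i
  have f1 := h i (kOf n j m x i)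
  have f2 := h i (kOf n j m x i + 1)
  rw [abs_sub_comm] at f2
  have f1' : 2 * del n m < x i - sig n j m - kOf n j m x i * Lm m := by
    rcases abs_cases (x i - sig n j m - kOf n j m x i * Lm m) with ⟨he, _⟩ | ⟨he, _⟩
    · linarith [f1, he]
    · push_cast at *; linarith
  have f2' : 2 * del n m < sig n j m + (kOf n j m x i + 1) * Lm m - x i := by
    rcases abs_cases (sig n j m + (kOf n j m x i + 1) * Lm m - x i) with ⟨he, _⟩ | ⟨he, _⟩
    · have : sig n j m + ((kOf n j m x i : ℝ) + 1) * Lm m - x i =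
        ((kOf n j m x i + 1 : ℤ) * Lm m : ℝ) - (x i - sig n j m) := by push_cast; ring
      rw [abs_sub_comm] at f2
      calc 2 * del n m < |x i - sig n j m - ((kOf n j m x i + 1:ℤ)) * Lm m| := h i _
        _ = |sig n j m + ((kOf n j m x i:ℝ) + 1) * Lm m - x i| := by
              rw [abs_sub_comm]; congr 1; push_cast; ring
        _ = sig n j m + ((kOf n j m x i:ℝ) + 1) * Lm m - x i := by rw [abs_of_nonneg]; push_cast at *; linarith
    · push_cast at *; linarith
  constructor <;> [linarith [f1']; linarith [f2']]

/-- `farr` at threshold `δ m /2` gives membership in `fnl` of `kOf`. -/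
lemma farr_fnl {n j m : ℕ} {x : Fin n → ℝ} (h : farr n j m (del n m / 2) x) :
    x ∈ fnl n j m (kOf n j m x) := by
  intro i
  have h1 := kOf_le n j m x i
  have h2 := kOf_lt n j m x i
  have f1 := h i (kOf n j m x i)
  have f2 := h i (kOf n j m x i + 1)
  have f1' : del n m / 2 < x i - sig n j m - kOf n j m x i * Lm m := by
    rcases abs_cases (x i - sig n j m - kOf n j m x i * Lm m) with ⟨he, _⟩ | ⟨he, _⟩
    · linarith [f1, he]
    · push_cast at *; linarith
  have f2' : del n m / 2 < sig n j m + ((kOf n j m x i:ℝ) + 1) * Lm m - x i := by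
    have he : x i - sig n j m - ((kOf n j m x i + 1:ℤ)) * Lm m < 0 := by push_cast; linarith
    have := h i (kOf n j m x i + 1)
    rw [abs_of_neg he] at this
    push_cast at *; linarith
  constructor <;> [linarith [f1']; linarith [f2']]



lemma sep_contra {t p q θ s : ℝ} (h1 : |t - p| ≤ θ) (h2 : |t - q| ≤ θ)
    (hs : s ≤ |p - q|) : s ≤ 2*θ := by
  have h3 : |p - q| = |(t - q) - (t - p)| := by rw [show (t-q)-(t-p) = p - q by ring]
  have h4 : |(t - q) - (t - p)| ≤ |t - q| + |t - p| := abs_sub _ _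
  linarith [hs, h3 ▸ hs]

/-- main two-scale pigeonhole -/
lemma pigeon1 (x : Fin n → ℝ) (m : ℕ) :
    ∃ j ≤ n, farr n j (m+1) (2 * del n (m+1)) x ∧ farr n j m (2 * del n (m+1)) x := by
  by_contra hcon
  push_neg at hcon
  have hbad : ∀ j : Fin (n+1), ∃ i : Fin n,
      (∃ z : ℤ, |x i - (sig n (j:ℕ) (m+1) + z * Lm (m+1))| ≤ 2 * del n (m+1)) ∨
      (∃ z : ℤ, |x i - (sig n (j:ℕ) m + z * Lm m)| ≤ 2 * del n (m+1)) := by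
    intro j
    have hj := hcon (j:ℕ) (Nat.lt_succ_iff.1 j.2)
    by_contra hno
    push_neg at hno
    apply hj
    · intro i z; have := (hno i).1 z; rw [sub_sub]; linarith [this]
    · intro i z; have := (hno i).2 z; rw [sub_sub]; linarith [this]
  choose g hg using hbad
  obtain ⟨a, b, hab, hi⟩ := Fintype.exists_ne_map_eq_of_card_lt g (by simp)
  have ha := hg a
  have hb := hg b
  rw [← hi] at hb
  set i := g a
  set θ := 2 * del n (m+1) with hθ
  set u := Lm (m+1) / ((n:ℝ)+1) with hu
  have hupos : 0 < u := by have := Lm_pos (m+1); rw [hu]; positivity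
  have hθu : 2 * θ = u / 4 := by
    rw [hθ, hu]; unfold del; field_simp; ring
  have haneb : (a:ℕ) ≠ (b:ℕ) := fun h => hab (Fin.ext h)
  have ha' := Nat.lt_succ_iff.1 a.2
  have hb' := Nat.lt_succ_iff.1 b.2
  rcases ha with ⟨z, hz⟩ | ⟨z, hz⟩ <;> rcases hb with ⟨z', hz'⟩ | ⟨z', hz'⟩
  · have h := sep_contra hz hz' (sepFF (m+1) ha' hb' haneb z z')
    rw [hθu] at h
    rw [hu] at h; linarith [hupos, h, hu ▸ h]
  · have h := sep_contra hz hz' (sepFC (n := n) m z z')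
    rw [hθu] at h
    have e1 : u / 2 = Lm (m+1) / (2*((n:ℝ)+1)) := by rw [hu, div_div, mul_comm]
    rw [← e1] at h
    linarith
  · have h := sep_contra hz' hz (sepFC (n := n) m z' z)
    rw [hθu] at h
    have e1 : u / 2 = Lm (m+1) / (2*((n:ℝ)+1)) := by rw [hu, div_div, mul_comm]
    rw [← e1] at h
    linarith
  · have h := sep_contra hz hz' (sepFF m ha' hb' haneb z z')
    rw [hθu] at h
    have hn0 : ((n:ℝ)+1) ≠ 0 := by positivity
    have e2 : 4 * u = Lm m / ((n:ℝ)+1) := by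
      rw [hu, Lm_succ]; field_simp
    rw [← e2] at h
    linarith

/-- single-scale pigeonhole -/
lemma pigeon0 (x : Fin n → ℝ) (m : ℕ) :
    ∃ j ≤ n, farr n j m (2 * del n m) x := by
  by_contra hcon
  push_neg at hcon
  have hbad : ∀ j : Fin (n+1), ∃ i : Fin n,
      (∃ z : ℤ, |x i - (sig n (j:ℕ) m + z * Lm m)| ≤ 2 * del n m) := by
    intro j
    have hj := hcon (j:ℕ) (Nat.lt_succ_iff.1 j.2)
    by_contra hno
    push_neg at hno
    apply hj
    intro i z; have := hno i z; rw [sub_sub]; linarith [this]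
  choose g hg using hbad
  obtain ⟨a, b, hab, hi⟩ := Fintype.exists_ne_map_eq_of_card_lt g (by simp)
  have ha := hg a
  have hb := hg b
  rw [← hi] at hb
  set i := g a
  obtain ⟨z, hz⟩ := ha
  obtain ⟨z', hz'⟩ := hb
  have h := sep_contra hz hz' (sepFF m (Nat.lt_succ_iff.1 a.2) (Nat.lt_succ_iff.1 b.2)
    (fun h => hab (Fin.ext h)) z z')
  set u := Lm m / ((n:ℝ)+1) with hu
  have hupos : 0 < u := by have := Lm_pos m; rw [hu]; positivity
  have hθu : 2 * (2 * del n m) = u / 4 := by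
    rw [hu]; unfold del; field_simp; ring
  rw [hθu] at h
  rw [hu] at h hupos; linarith


section Main

variable {n : ℕ}

/-- openness of the final cells -/
lemma fnl_open (n j m : ℕ) (k : Fin n → ℤ) : IsOpen (fnl n j m k) := by
  have : fnl n j m k = ⋂ i, ((fun x : Fin n → ℝ => x i) ⁻¹'
      (Ioo (sig n j m + k i * Lm m + del n m / 2) (sig n j m + (k i + 1) * Lm m - del n m / 2))) := by
    ext x; simp [fnl, mem_iInter, mem_Ioo]
  rw [this]
  exact isOpen_iInter_of_finite fun i => (isOpen_Ioo).preimage (continuous_apply i)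

lemma subt_closed (n j m : ℕ) (k : Fin n → ℤ) : IsClosed (subt n j m k) := by
  have : subt n j m k = ⋂ i, ((fun x : Fin n → ℝ => x i) ⁻¹'
      (Icc (sig n j m + k i * Lm m + del n m / 4) (sig n j m + (k i + 1) * Lm m - del n m / 4))) := by
    ext x; simp [subt, mem_iInter, mem_Icc]
  rw [this]
  exact isClosed_iInter fun i => (isClosed_Icc).preimage (continuous_apply i)

/-- different cells of one grid are far apart -/
lemma subt_sep {n j m : ℕ} {k k' : Fin n → ℤ} (hne : k ≠ k') {x y : Fin n → ℝ}
    (hx : x ∈ subt n j m k) (hy : y ∈ subt n j m k') : del n m / 2 ≤ dist x y := by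
  have : ∃ i, k i ≠ k' i := by
    by_contra h; push_neg at h; exact hne (funext h)
  obtain ⟨i, hi⟩ := this
  have hxi := hx i
  have hyi := hy i
  have hL := Lm_pos m
  have hd := del_pos n m
  have key : del n m / 2 ≤ |x i - y i| := by
    rcases lt_or_gt_of_ne hi with h | h
    · -- k i < k' i, so k i + 1 ≤ k' i
      have h1 : ((k i : ℝ) + 1) ≤ (k' i : ℝ) := by exact_mod_cast h
      have : x i ≤ y i - del n m / 2 := by nlinarith [hxi.2, hyi.1]
      rw [abs_sub_comm, abs_of_nonneg (by linarith)]
      linarith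
    · have h1 : ((k' i : ℝ) + 1) ≤ (k i : ℝ) := by exact_mod_cast h
      have : y i ≤ x i - del n m / 2 := by nlinarith [hyi.2, hxi.1]
      rw [abs_of_nonneg (by linarith)]
      linarith
  calc del n m / 2 ≤ |x i - y i| := key
    _ = dist (x i) (y i) := (Real.dist_eq _ _).symm
    _ ≤ dist x y := dist_le_pi_dist x y i

/-- the core of a cell (geometry and Lebesgue-size window) -/
noncomputable def cor (C : Set (Set (Fin n → ℝ))) (j m : ℕ) (k : Fin n → ℤ) :
    Set (Fin n → ℝ) :=
  corG n j m k ∩ {x | 2 * Lm m ≤ fl C x ∧ fl C x ≤ 8 * Lm m}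

/-- a cell is kept if its core is nonempty -/
def Kept (C : Set (Set (Fin n → ℝ))) (j m : ℕ) (k : Fin n → ℤ) : Prop :=
  (cor C j m k).Nonempty

lemma corG_subset_ccube (n j m : ℕ) (k : Fin n → ℤ) : corG n j m k ⊆ ccube n j m k := by
  intro x hx i
  have h := hx i
  have hd := del_pos n m
  constructor <;> [linarith [h.1]; linarith [h.2]]

/-- every kept cell sits inside a member of the cover -/
lemma kept_member {C : Set (Set (Fin n → ℝ))} {j m : ℕ} {k : Fin n → ℤ}
    (hK : Kept C j m k) : ∃ U ∈ C, ccube n j m k ⊆ U := by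
  obtain ⟨y, hyG, hyf⟩ := hK
  obtain ⟨U, hU, hball⟩ := fl_ball C (Lm_pos m) hyf.1
  refine ⟨U, hU, fun z hz => hball ?_⟩
  rw [Metric.mem_ball]
  have h1 : dist z y ≤ Lm m := ccube_diam hz (corG_subset_ccube n j m k hyG)
  have := Lm_pos m
  linarith

/-- subtracted region: all kept cells of colour j at scales < m -/
noncomputable def SubU (C : Set (Set (Fin n → ℝ))) (j m : ℕ) : Set (Fin n → ℝ) :=
  ⋃ m' ∈ Set.Iio m, ⋃ k' ∈ {k' | Kept C j m' k'}, subt n j m' k'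

lemma subSc_closed (C : Set (Set (Fin n → ℝ))) (j m' : ℕ) :
    IsClosed (⋃ k' ∈ {k' | Kept C j m' k'}, subt n j m' k') := by
  set S := ⋃ k' ∈ {k' | Kept C j m' k'}, subt n j m' k' with hS
  rw [← isOpen_compl_iff]
  rw [Metric.isOpen_iff]
  intro x hx
  have hd := del_pos n m'
  by_cases hcase : ∃ k', Kept C j m' k' ∧ (Metric.ball x (del n m' / 8) ∩ subt n j m' k').Nonempty
  · obtain ⟨k₀, hk₀K, w, hwball, hwsub⟩ := hcase
    have hxk₀ : x ∉ subt n j m' k₀ := by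
      intro hmem
      exact hx (mem_biUnion hk₀K hmem)
    have : x ∈ (subt n j m' k₀)ᶜ := hxk₀
    obtain ⟨r', hr', hball'⟩ := Metric.isOpen_iff.1 (subt_closed n j m' k₀).isOpen_compl x this
    refine ⟨min r' (del n m' / 8), lt_min hr' (by linarith), ?_⟩
    intro y hy
    intro hyS
    obtain ⟨k, hkK, hysub⟩ := by
      simpa [hS, mem_iUnion] using hyS
    rcases eq_or_ne k k₀ with rfl | hkne
    · exact (hball' (Metric.ball_subset_ball (min_le_left _ _) hy)) hysub
    · have hsep := subt_sep hkne hysub hwsub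
      have h1 : dist y x < del n m' / 8 :=
        Metric.mem_ball.1 (Metric.ball_subset_ball (min_le_right _ _) hy)
      have h2 : dist x w < del n m' / 8 := by
        rw [dist_comm]; exact Metric.mem_ball.1 hwball
      have := dist_triangle y x w
      linarith
  · refine ⟨del n m' / 8, by linarith, ?_⟩
    intro y hy hyS
    obtain ⟨k, hkK, hysub⟩ := by
      simpa [hS, mem_iUnion] using hyS
    exact hcase ⟨k, hkK, y, Metric.mem_ball.2 hy, hysub⟩

lemma SubU_closed (C : Set (Set (Fin n → ℝ))) (j m : ℕ) : IsClosed (SubU C j m) :=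
  Set.Finite.isClosed_biUnion (Set.finite_Iio m)
    (fun m' _ => subSc_closed C j m')

/-- the final cells -/
noncomputable def fnl' (C : Set (Set (Fin n → ℝ))) (j m : ℕ) (k : Fin n → ℤ) :
    Set (Fin n → ℝ) :=
  fnl n j m k \ SubU C j m

lemma fnl'_open (C : Set (Set (Fin n → ℝ))) (j m : ℕ) (k : Fin n → ℤ) :
    IsOpen (fnl' C j m k) :=
  (fnl_open n j m k).sdiff (SubU_closed C j m)

lemma mem_SubU {C : Set (Set (Fin n → ℝ))} {j m m' : ℕ} {k' : Fin n → ℤ}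
    {x : Fin n → ℝ} (hm : m' < m) (hK : Kept C j m' k') (hx : x ∈ subt n j m' k') :
    x ∈ SubU C j m := by
  unfold SubU
  exact mem_biUnion (mem_Iio.2 hm) (mem_biUnion hK hx)

lemma not_mem_SubU {C : Set (Set (Fin n → ℝ))} {j m : ℕ}
    {x : Fin n → ℝ} (h : ∀ m' < m, ∀ k', Kept C j m' k' → x ∉ subt n j m' k') :
    x ∉ SubU C j m := by
  intro hx
  unfold SubU at hx
  simp only [mem_iUnion, mem_Iio] at hx
  obtain ⟨m', hm', k', hK, hsub⟩ := hx
  exact h m' hm' k' hK hsub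

/-- kept cells force a lower bound on `fl` on their subtracted region -/
lemma blockF {C : Set (Set (Fin n → ℝ))} {j m' : ℕ} {k' : Fin n → ℤ}
    {x : Fin n → ℝ} (hK : Kept C j m' k') (hx : x ∈ subt n j m' k') :
    Lm m' ≤ fl C x := by
  obtain ⟨y, hyG, hyf⟩ := hK
  have h1 : dist y x ≤ Lm m' :=
    ccube_diam (corG_subset_ccube n j m' k' hyG) (subt_subset_ccube n j m' k' hx)
  have h2 := fl_lip C y x
  linarith [hyf.1]

/-- THE COVERAGE LEMMA -/
lemma coverage (C : Set (Set (Fin n → ℝ))) (x : Fin n → ℝ) (hx : 0 < fl C x) :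
    ∃ j ≤ n, ∃ m k, Kept C j m k ∧ x ∈ fnl' C j m k := by
  have hex : ∃ m, 2 * Lm m ≤ fl C x := by
    obtain ⟨m, hm⟩ := exists_pow_lt_of_lt_one (by linarith : (0:ℝ) < fl C x / 2)
      (by norm_num : (1/4 : ℝ) < 1)
    exact ⟨m, by unfold Lm; linarith⟩
  set M := Nat.find hex with hMdef
  have hM : 2 * Lm M ≤ fl C x := Nat.find_spec hex
  have hMmin : ∀ m' < M, fl C x < 2 * Lm m' := by
    intro m' hm'
    have := Nat.find_min hex hm'
    push_neg at this
    linarith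
  match hMcase : M with
  | 0 =>
    obtain ⟨j, hj, hfar⟩ := pigeon0 x 0
    have hcorG := farr_corG hfar
    have hwin : 2 * Lm 0 ≤ fl C x ∧ fl C x ≤ 8 * Lm 0 := by
      rw [Lm_zero]
      refine ⟨by rw [Lm_zero] at hM; linarith, by linarith [fl_le8 C x]⟩
    refine ⟨j, hj, 0, kOf n j 0 x, ⟨x, hcorG, hwin⟩, ?_⟩
    refine ⟨corG_subset_fnl n j 0 _ hcorG, ?_⟩
    apply not_mem_SubU
    intro m' hm'
    omega
  | m0 + 1 =>
    obtain ⟨j, hj, hfine, hcoarse⟩ := pigeon1 x m0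
    have hflup : fl C x < 2 * Lm m0 := hMmin m0 (by omega)
    have hL01 : Lm m0 = 4 * Lm (m0+1) := by rw [Lm_succ]; ring
    have hfl8 : fl C x ≤ 8 * Lm (m0+1) := by linarith
    have hM1 : 2 * Lm (m0+1) ≤ fl C x := hM
    -- low-scale non-blocking, valid for any colour
    have hlow : ∀ m'' k'', m'' < m0 → Kept C j m'' k'' → x ∉ subt n j m'' k'' := by
      intro m'' k'' hm'' hK'' hsub
      have h1 := blockF hK'' hsub
      have h2 := hMmin (m''+1) (by omega)
      rw [Lm_succ] at h2
      linarith
    by_cases hK : Kept C j m0 (kOf n j m0 x)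
    · -- escape at the coarse scale
      have hfarr : farr n j m0 (del n m0 / 2) x := by
        intro i z
        have := hcoarse i z
        rw [del_succ] at this
        linarith
      refine ⟨j, hj, m0, kOf n j m0 x, hK, farr_fnl hfarr, ?_⟩
      apply not_mem_SubU
      intro m' hm' k' hK' hsub
      exact hlow m' k' hm' hK' hsub
    · -- cover at the fine scale
      have hcorG := farr_corG hfine
      refine ⟨j, hj, m0+1, kOf n j (m0+1) x, ⟨x, hcorG, hM1, hfl8⟩, ?_⟩
      refine ⟨corG_subset_fnl n j (m0+1) _ hcorG, ?_⟩
      apply not_mem_SubU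
      intro m' hm' k' hK' hsub
      rcases Nat.lt_succ_iff_lt_or_eq.1 hm' with h | rfl
      · exact hlow m' k' h hK' hsub
      · have := subt_kOf hsub
        rw [this] at hK'
        exact hK hK'

/-- MULTIPLICITY: same colour, two final cells meeting -/
lemma mult {C : Set (Set (Fin n → ℝ))} {j m m' : ℕ} {k k' : Fin n → ℤ}
    (hK : Kept C j m k) (hK' : Kept C j m' k') {x : Fin n → ℝ}
    (h1 : x ∈ fnl' C j m k) (h2 : x ∈ fnl' C j m' k') : m = m' ∧ k = k' := by
  have key : ∀ {a b : ℕ}, a < b → ∀ {ka kb : Fin n → ℤ}, Kept C j a ka →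
      x ∈ fnl' C j a ka → x ∉ fnl' C j b kb := by
    intro a b hab ka kb hKa hxa hxb
    exact hxb.2 (mem_SubU hab hKa (fnl_subset_subt n j a ka hxa.1))
  rcases lt_trichotomy m m' with h | rfl | h
  · exact absurd h2 (key h hK h1)
  · refine ⟨rfl, ?_⟩
    by_contra hne
    obtain ⟨i, hi⟩ : ∃ i, k i ≠ k' i := by
      by_contra hh; push_neg at hh; exact hne (funext hh)
    have hxi := h1.1 i
    have hyi := h2.1 i
    have hL := Lm_pos m
    have hd := del_pos n m
    rcases lt_or_gt_of_ne hi with hlt | hlt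
    · have : ((k i : ℝ) + 1) ≤ (k' i : ℝ) := by exact_mod_cast hlt
      nlinarith [hxi.2, hyi.1]
    · have : ((k' i : ℝ) + 1) ≤ (k i : ℝ) := by exact_mod_cast hlt
      nlinarith [hyi.2, hxi.1]
  · exact absurd h1 (key h hK' h2)

end Main

section Assembly

variable {X : Type*} [TopologicalSpace X]

lemma generated_factor {n : ℕ} (Φ : Fin n → C(X, ℝ)) (M : OpFamily) {f : X → ℝ}
    (h : Generated (Set.range Φ) M f) :
    ∃ G : (Fin n → ℝ) → ℝ, Continuous G ∧ ∀ x, f x = G (fun i => Φ i x) := by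
  induction h with
  | base φ hφ =>
    obtain ⟨i, rfl⟩ := hφ
    exact ⟨fun v => v i, continuous_apply i, fun x => rfl⟩
  | post g f hf ih =>
    obtain ⟨G, hG, hGf⟩ := ih
    refine ⟨fun v => g (G v), g.continuous.comp hG, fun x => ?_⟩
    show g (f x) = g (G fun i => Φ i x)
    rw [hGf x]
  | op p hp f hf ih =>
    choose G hG hGf using ih
    refine ⟨fun v => p.2 (fun i => G i v),
      p.2.continuous.comp (continuous_pi fun i => hG i), fun x => ?_⟩
    show p.2 (fun i => f i x) = p.2 (fun i => G i (fun i' => Φ i' x))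
    congr 1
    funext i
    exact hGf i x

lemma key_nbhd [CompletelyRegularSpace X] {n : ℕ} (Φ : Fin n → C(X, ℝ)) (M : OpFamily)
    (hΦ : IsGeneratingStar (Set.range Φ) M) {U : Set X} (hU : IsOpen U) {x : X} (hx : x ∈ U) :
    ∃ W : Set (Fin n → ℝ), IsOpen W ∧ (fun i => Φ i x) ∈ W ∧
      (fun y : X => (fun i => Φ i y)) ⁻¹' W ⊆ U := by
  obtain ⟨g, hgc, hgx, hgK⟩ := CompletelyRegularSpace.completely_regular x Uᶜ
    hU.isClosed_compl (by simpa using hx)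
  set h : C(X, ℝ) := ⟨fun y => ((g y : unitInterval) : ℝ), continuous_subtype_val.comp hgc⟩
    with hh
  have hbdd : BddFun (h : X → ℝ) := by
    refine ⟨1, fun y => ?_⟩
    have h0 := (g y).2.1
    have h1 := (g y).2.2
    rw [abs_le]
    constructor <;> simp [hh] <;> linarith
  obtain ⟨G, hGc, hGf⟩ := generated_factor Φ M (hΦ h hbdd)
  refine ⟨G ⁻¹' (Set.Iio (1/2)), (isOpen_Iio).preimage hGc, ?_, ?_⟩
  · have : h x = 0 := by simp [hh, hgx]
    have h2 := hGf x
    rw [this] at h2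
    simp only [mem_preimage, mem_Iio]
    rw [← h2]
    norm_num
  · intro y hy
    by_contra hyU
    have h1 : g y = 1 := hgK hyU
    have h2 : h y = 1 := by simp [hh, h1]
    have h3 := hGf y
    rw [h2] at h3
    simp only [mem_preimage, mem_Iio] at hy
    rw [← h3] at hy
    norm_num at hy

theorem main_cov [CompletelyRegularSpace X]
    (n : ℕ) (Φ : Fin n → C(X, ℝ)) (M : OpFamily)
    (hΦ : IsGeneratingStar (Set.range Φ) M) : CovDimLE X n := by
  classical
  intro 𝒞 h𝒞open h𝒞cov
  set e : X → (Fin n → ℝ) := fun x i => Φ i x with he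
  have he_cont : Continuous e := continuous_pi fun i => (Φ i).continuous
  set C : Set (Set (Fin n → ℝ)) := {W | IsOpen W ∧ ∃ U ∈ 𝒞, e ⁻¹' W ⊆ U} with hC
  have hflpos : ∀ x : X, 0 < fl C (e x) := by
    intro x
    have hx : x ∈ ⋃₀ 𝒞 := by rw [h𝒞cov]; trivial
    obtain ⟨U, hU, hxU⟩ := hx
    obtain ⟨W, hWo, hWx, hWsub⟩ := key_nbhd Φ M hΦ (h𝒞open U hU) hxU
    exact fl_pos C (show W ∈ C from ⟨hWo, U, hU, hWsub⟩) hWo hWx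
  set 𝒱 : Set (Set X) :=
    {V | ∃ j m : ℕ, ∃ k : Fin n → ℤ, j ≤ n ∧ Kept C j m k ∧ V = e ⁻¹' (fnl' C j m k)}
    with h𝒱
  refine ⟨𝒱, ?_, ?_, ?_, ?_⟩
  · rintro V ⟨j, m, k, hj, hK, rfl⟩
    exact (fnl'_open C j m k).preimage he_cont
  · apply eq_univ_of_forall
    intro x
    obtain ⟨j, hj, m, k, hK, hmem⟩ := coverage C (e x) (hflpos x)
    exact ⟨e ⁻¹' (fnl' C j m k), ⟨j, m, k, hj, hK, rfl⟩, hmem⟩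
  · rintro V ⟨j, m, k, hj, hK, rfl⟩
    obtain ⟨U', hU'C, hsub⟩ := kept_member hK
    obtain ⟨hU'o, U, hU, hUsub⟩ := hU'C
    refine ⟨U, hU, fun y hy => hUsub ?_⟩
    apply mem_preimage.2
    apply hsub
    exact subt_subset_ccube n j m k (fnl_subset_subt n j m k (mem_preimage.1 hy).1)
  · intro x
    have hwit : ∀ V : {V // V ∈ {V ∈ 𝒱 | x ∈ V}},
        ∃ j m : ℕ, ∃ k : Fin n → ℤ, j ≤ n ∧ Kept C j m k ∧
          (V : Set X) = e ⁻¹' (fnl' C j m k) := fun V => V.2.1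
    choose jw mw kw hjw hKw hVw using hwit
    have hmemw : ∀ V : {V // V ∈ {V ∈ 𝒱 | x ∈ V}},
        e x ∈ fnl' C (jw V) (mw V) (kw V) := by
      intro V
      have hxV : x ∈ (V : Set X) := V.2.2
      rw [hVw V] at hxV
      exact hxV
    have hinj : Function.Injective
        (fun V : {V // V ∈ {V ∈ 𝒱 | x ∈ V}} => (⟨jw V, Nat.lt_succ_of_le (hjw V)⟩ : Fin (n+1))) := by
      intro V V' hVV'
      have hj : jw V = jw V' := by
        simpa using congrArg Fin.val hVV'
      have h1 := hmemw V
      have h2 := hmemw V'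
      rw [hj] at h1
      have hK1 := hKw V
      rw [hj] at hK1
      obtain ⟨hm, hk⟩ := mult hK1 (hKw V') h1 h2
      apply Subtype.ext
      rw [hVw V, hVw V', hj, hm, hk]
    have hfin : Finite ↥{V ∈ 𝒱 | x ∈ V} := Finite.of_injective _ hinj
    refine ⟨Set.finite_coe_iff.1 hfin, ?_⟩
    have hcard : Nat.card ↥{V ∈ 𝒱 | x ∈ V} ≤ n + 1 := by
      have := Nat.card_le_card_of_injective _ hinj
      simpa only [Nat.card_eq_fintype_card, Fintype.card_fin] using this
    rw [← Nat.card_coe_set_eq]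
    exact hcard

end Assembly

end DimMain

/-- A completely regular T1 space with a generating* family of `n` elements has
covering dimension at most `n`. -/
theorem stmt2 {X : Type*} [TopologicalSpace X] [T1Space X] [CompletelyRegularSpace X]
    (n : ℕ) (Φ : Fin n → C(X, ℝ)) (M : OpFamily)
    (hΦ : IsGeneratingStar (Set.range Φ) M) :
    CovDimLE X n :=
  DimMain.main_cov n Φ M hΦ
end

section
/- The metric fan F does not admit a countable generating* family with respect to any set of operations M. In particular, F has no countable basic* family. -/
open Set

/-- The metric fan: underlying set `{*} ∪ (ℕ × ℕ)` where `none` plays the role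
of the apex `*`. -/
def Fan : Type := Option (ℕ × ℕ)

/-- Points other than the apex are isolated; basic neighborhoods of the apex are
`{*} ∪ ([N, ∞) × ℕ)`. -/
instance : TopologicalSpace Fan where
  IsOpen s := none ∈ s → ∃ N : ℕ, ∀ n ≥ N, ∀ k : ℕ, some (n, k) ∈ s
  isOpen_univ := fun _ => ⟨0, fun _ _ _ => Set.mem_univ _⟩
  isOpen_inter := by
    intro s t hs ht h
    obtain ⟨N1, h1⟩ := hs h.1
    obtain ⟨N2, h2⟩ := ht h.2
    exact ⟨max N1 N2, fun n hn k =>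
      ⟨h1 n (le_trans (le_max_left _ _) hn) k, h2 n (le_trans (le_max_right _ _) hn) k⟩⟩
  isOpen_sUnion := by
    intro S hS h
    obtain ⟨s, hsS, hns⟩ := h
    obtain ⟨N, hN⟩ := hS s hsS hns
    exact ⟨N, fun n hn k => ⟨s, hsS, hN n hn k⟩⟩

/-- `Φ` is a basic* family: every bounded continuous `f` is a finite sum
`∑ gᵢ ∘ φᵢ` with `φᵢ ∈ Φ` and `gᵢ ∈ C(ℝ)`. -/
def IsBasicStarFamily {X : Type*} [TopologicalSpace X] (Φ : Set C(X, ℝ)) : Prop :=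
  ∀ f : C(X, ℝ), (∃ B : ℝ, ∀ x, |f x| ≤ B) →
    ∃ (n : ℕ) (φ : Fin n → C(X, ℝ)) (g : Fin n → C(ℝ, ℝ)),
      (∀ i, φ i ∈ Φ) ∧ ∀ x, f x = ∑ i, g i (φ i x)

open Filter Topology

lemma generated_repr {X : Type*} [TopologicalSpace X] {Φ : Set C(X, ℝ)} {M : OpFamily}
    {h : X → ℝ} (hg : Generated Φ M h) :
    ∃ s : Set C(X, ℝ), s.Finite ∧ s ⊆ Φ ∧
      ∃ F : (↥s → ℝ) → ℝ, Continuous F ∧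
        ∀ x, h x = F (fun ψ => (ψ : C(X,ℝ)) x) := by
  induction hg with
  | base φ hφ =>
      exact ⟨{φ}, Set.finite_singleton _, by simpa, fun v => v ⟨φ, rfl⟩,
        continuous_apply _, fun x => rfl⟩
  | post g f hf ih =>
      obtain ⟨s, hfin, hsub, F, hF, hrep⟩ := ih
      exact ⟨s, hfin, hsub, fun v => g (F v), g.continuous.comp hF,
        fun x => by simp only; rw [hrep]⟩
  | op p hp f hf ih =>
      choose s hfin hsub F hF hrep using ih
      refine ⟨⋃ i, s i, Set.finite_iUnion hfin, Set.iUnion_subset hsub,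
        fun v => p.2 (fun i => F i (fun ψ => v ⟨ψ.1, Set.mem_iUnion.mpr ⟨i, ψ.2⟩⟩)),
        p.2.continuous.comp (continuous_pi fun i =>
          (hF i).comp (continuous_pi fun ψ => continuous_apply _)),
        fun x => ?_⟩
      simp only
      simp only [hrep]

lemma fan_tail (ψ : C(Fan, ℝ)) :
    ∃ N, ∀ n ≥ N, ∀ k, |ψ (some (n,k)) - ψ none| ≤ 1 := by
  have hU : IsOpen (ψ ⁻¹' Metric.ball (ψ none) 1) :=
    Metric.isOpen_ball.preimage ψ.continuous
  have h0 : (none : Fan) ∈ ψ ⁻¹' Metric.ball (ψ none) 1 := Metric.mem_ball_self one_pos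
  obtain ⟨N, hN⟩ := hU h0
  exact ⟨N, fun n hn k => le_of_lt (by have h : ψ (some (n,k)) ∈ Metric.ball (ψ none) 1 := hN n hn k; simpa [Real.dist_eq] using h)⟩

lemma fan_continuous (f : Fan → ℝ) (h0 : f none = 0)
    (h : ∀ ε > (0:ℝ), ∃ N, ∀ n ≥ N, ∀ k, |f (some (n,k))| < ε) : Continuous f := by
  rw [continuous_def]
  intro s hs
  intro hmem
  have h0' : (0:ℝ) ∈ s := by have := Set.mem_preimage.mp hmem; rwa [h0] at this
  obtain ⟨ε, hε, hball⟩ := Metric.isOpen_iff.mp hs _ h0'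
  obtain ⟨N, hN⟩ := h ε hε
  exact ⟨N, fun n hn k => hball (by simpa [Real.dist_eq] using hN n hn k)⟩

lemma fan_main : ∀ Φ : Set C(Fan, ℝ), Φ.Countable → ∀ M : OpFamily,
    ¬ IsGeneratingStar Φ M := by
  classical
  intro Φ hΦ M hgen
  -- enumerate finite subsets of Φ
  obtain ⟨T, hT⟩ := (Set.countable_setOf_finite_subset hΦ).exists_eq_range
    ⟨∅, Set.finite_empty, Set.empty_subset _⟩
  have hTfin : ∀ m, (T m).Finite ∧ T m ⊆ Φ := by
    intro m
    have : T m ∈ {t : Set C(Fan, ℝ) | t.Finite ∧ t ⊆ Φ} := by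
      rw [hT]; exact Set.mem_range_self m
    exact this
  -- tail bounds
  choose Nf hNf using fan_tail
  set N : ℕ → ℕ := fun m => ((hTfin m).1.toFinset).sup Nf with hNdef
  have hNle : ∀ m, ∀ ψ ∈ T m, Nf ψ ≤ N m := by
    intro m ψ hψ
    exact Finset.le_sup (by simpa [(hTfin m).1.mem_toFinset] using hψ)
  -- columns
  set c : ℕ → ℕ := fun m => Nat.rec (N 0) (fun m ih => max (N (m+1)) (ih+1)) m with hcdef
  have hcN : ∀ m, N m ≤ c m := by
    intro m; cases m with
    | zero => exact le_refl _
    | succ m => exact le_max_left _ _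
  have hcmono : StrictMono c := by
    apply strictMono_nat_of_lt_succ
    intro m
    exact lt_of_lt_of_le (Nat.lt_succ_self _) (le_max_right _ _)
  -- convergent subsequences in each chosen column
  have hsubseq : ∀ m, ∃ (σ : ℕ → ℕ) (y : ↥(T m) → ℝ), StrictMono σ ∧
      Tendsto ((fun j => fun ψ : ↥(T m) => (ψ : C(Fan,ℝ)) (some (c m, j))) ∘ σ)
        atTop (𝓝 y) := by
    intro m
    haveI : Finite ↥(T m) := (hTfin m).1.to_subtype
    have hcomp : IsCompact (Set.pi Set.univ (fun ψ : ↥(T m) =>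
        Set.Icc ((ψ : C(Fan,ℝ)) none - 1) ((ψ : C(Fan,ℝ)) none + 1))) :=
      isCompact_univ_pi fun ψ => isCompact_Icc
    have hx : ∀ j, (fun ψ : ↥(T m) => (ψ : C(Fan,ℝ)) (some (c m, j))) ∈
        Set.pi Set.univ (fun ψ : ↥(T m) =>
          Set.Icc ((ψ : C(Fan,ℝ)) none - 1) ((ψ : C(Fan,ℝ)) none + 1)) := by
      intro j
      rw [Set.mem_univ_pi]
      intro ψ
      have h1 := hNf (ψ : C(Fan,ℝ)) (c m) (le_trans (hNle m ψ ψ.2) (hcN m)) j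
      rw [abs_le] at h1
      exact ⟨by linarith [h1.1], by linarith [h1.2]⟩
    obtain ⟨y, _, σ, hσ, hlim⟩ := hcomp.tendsto_subseq hx
    exact ⟨σ, y, hσ, hlim⟩
  choose σ y hσmono hσlim using hsubseq
  -- the bad function
  set f : Fan → ℝ := fun z => Option.rec 0
    (fun p => if ∃ m, p.1 = c m ∧ ∃ j, p.2 = σ m j ∧ Even j
      then ((p.1 : ℝ) + 1)⁻¹ else 0) z with hfdef
  have hfnone : f none = 0 := rfl
  have hfsome : ∀ n k, f (some (n,k)) =
      if ∃ m, n = c m ∧ ∃ j, k = σ m j ∧ Even j then ((n : ℝ) + 1)⁻¹ else 0 :=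
    fun n k => rfl
  have hfabs : ∀ n k, |f (some (n,k))| ≤ ((n : ℝ) + 1)⁻¹ := by
    intro n k
    rw [hfsome]
    split
    · rw [abs_of_nonneg (by positivity)]
    · simp; positivity
  have hcont : Continuous f := by
    apply fan_continuous f hfnone
    intro ε hε
    obtain ⟨N0, hN0⟩ := exists_nat_gt ε⁻¹
    refine ⟨N0, fun n hn k => lt_of_le_of_lt (hfabs n k) ?_⟩
    have h1 : ε⁻¹ < (n : ℝ) + 1 := by
      have : (N0 : ℝ) ≤ (n : ℝ) := Nat.cast_le.mpr hn
      linarith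
    have h2 : (0:ℝ) < (n : ℝ) + 1 := by positivity
    exact inv_lt_of_inv_lt₀ hε h1
  have hbdd : BddFun f := by
    refine ⟨1, fun z => ?_⟩
    cases z with
    | none => simp [hfnone]
    | some p =>
      refine le_trans (hfabs p.1 p.2) ?_
      rw [inv_le_one_iff₀]
      right; have : (0:ℝ) ≤ (p.1 : ℝ) := Nat.cast_nonneg _
      linarith
  -- apply the generating hypothesis
  obtain ⟨s, hsfin, hssub, F, hF, hrep⟩ := generated_repr (hgen ⟨f, hcont⟩ hbdd)
  obtain ⟨m, hm⟩ : ∃ m, T m = s := by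
    have : s ∈ Set.range T := by rw [← hT]; exact ⟨hsfin, hssub⟩
    exact this
  subst hm
  -- contradiction via the alternating subsequence on column c m
  set x : ℕ → (↥(T m) → ℝ) := fun j => fun ψ : ↥(T m) => (ψ : C(Fan,ℝ)) (some (c m, j))
    with hxdef
  have heval : ∀ j, f (some (c m, j)) = F (x j) := fun j => hrep (some (c m, j))
  have hlimF : Tendsto (fun i => F (x (σ m i))) atTop (𝓝 (F (y m))) :=
    (hF.tendsto (y m)).comp (hσlim m)
  have h2i : Tendsto (fun i : ℕ => 2 * i) atTop atTop :=
    tendsto_atTop_mono (fun i => by simp only [id_eq]; omega) tendsto_id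
  have h2i1 : Tendsto (fun i : ℕ => 2 * i + 1) atTop atTop :=
    tendsto_atTop_mono (fun i => by simp only [id_eq]; omega) tendsto_id
  have heven : ∀ i, f (some (c m, σ m (2 * i))) = ((c m : ℝ) + 1)⁻¹ := by
    intro i
    rw [hfsome]
    exact if_pos ⟨m, rfl, 2 * i, rfl, even_two_mul i⟩
  have hodd : ∀ i, f (some (c m, σ m (2 * i + 1))) = 0 := by
    intro i
    rw [hfsome]
    apply if_neg
    rintro ⟨m', hn, j, hk, hev⟩
    have hmm : m = m' := hcmono.injective hn
    subst hmm
    have hjj : 2 * i + 1 = j := (hσmono m).injective hk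
    subst hjj
    obtain ⟨r, hr⟩ := hev
    omega
  have hA : Tendsto (fun i => F (x (σ m (2 * i)))) atTop (𝓝 (F (y m))) :=
    hlimF.comp h2i
  have hB : Tendsto (fun i => F (x (σ m (2 * i + 1)))) atTop (𝓝 (F (y m))) :=
    hlimF.comp h2i1
  have hA' : Tendsto (fun _ : ℕ => ((c m : ℝ) + 1)⁻¹) atTop (𝓝 (F (y m))) := by
    refine hA.congr fun i => ?_
    rw [← heval, heven]
  have hB' : Tendsto (fun _ : ℕ => (0:ℝ)) atTop (𝓝 (F (y m))) := by
    refine hB.congr fun i => ?_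
    rw [← heval, hodd]
  have e1 : ((c m : ℝ) + 1)⁻¹ = F (y m) := tendsto_nhds_unique hA' tendsto_const_nhds |>.symm
  have e2 : (0 : ℝ) = F (y m) := tendsto_nhds_unique hB' tendsto_const_nhds |>.symm
  have : ((c m : ℝ) + 1)⁻¹ = 0 := by rw [e1, ← e2]
  have hpos : (0:ℝ) < ((c m : ℝ) + 1)⁻¹ := by positivity
  linarith


/-- The metric fan admits no countable generating* family with respect to any
set of operations; in particular it has no countable basic* family. -/
theorem stmt5 :
    (∀ Φ : Set C(Fan, ℝ), Φ.Countable → ∀ M : OpFamily, ¬ IsGeneratingStar Φ M) ∧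
    (∀ Φ : Set C(Fan, ℝ), Φ.Countable → ¬ IsBasicStarFamily Φ) := by
  refine ⟨fan_main, fun Φ hΦ hbasic => fan_main Φ hΦ Set.univ ?_⟩
  intro f hb
  obtain ⟨n, φ, g, hφ, hsum⟩ := hbasic f hb
  have hfeq : (⇑f : Fan → ℝ) = fun z =>
      (⟨fun v : Fin n → ℝ => ∑ i, v i,
        continuous_finset_sum _ fun i _ => continuous_apply i⟩ : C((Fin n → ℝ), ℝ))
      (fun i => (fun z => g i (φ i z)) z) := by
    funext z
    simpa using hsum z
  rw [hfeq]
  exact Generated.op ⟨n, _⟩ (Set.mem_univ _) _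
    (fun i => Generated.post (g i) _ (Generated.base _ (hφ i)))
end

section
/- A T1 completely regular space with a countable generating* family (with respect to some set of operations) is locally compact. -/
open Set Filter Topology

/-- Positive uniform lower bound for finitely many positive reals. -/
lemma exists_pos_lb (c : ℕ → ℝ) (m : ℕ) (hc : ∀ n < m, 0 < c n) :
    ∃ δ > 0, ∀ n < m, δ ≤ c n := by
  induction m with
  | zero => exact ⟨1, one_pos, fun n h => absurd h (Nat.not_lt_zero n)⟩
  | succ m ih =>
    obtain ⟨δ, hδ, hδle⟩ := ih (fun n h => hc n (h.trans (Nat.lt_succ_self m)))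
    refine ⟨min δ (c m), lt_min hδ (hc m (Nat.lt_succ_self m)), fun n h => ?_⟩
    rcases Nat.lt_succ_iff_lt_or_eq.1 h with h | rfl
    · exact le_trans (min_le_left _ _) (hδle n h)
    · exact min_le_right _ _

/-- If a sequence has no convergent subsequence, then it stays uniformly away from
any given point (except for terms equal to that point). -/
lemma ncs_apart {X : Type*} [MetricSpace X] {w : ℕ → X}
    (hncs : ∀ (z : X) (σ : ℕ → ℕ), StrictMono σ → ¬ Tendsto (w ∘ σ) atTop (𝓝 z))
    (z : X) : ∃ ε > 0, ∀ k, w k ≠ z → ε ≤ dist (w k) z := by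
  by_contra h
  push_neg at h
  have hfreq : ∀ m : ℕ, ∃ᶠ k in atTop, w k ≠ z ∧ dist (w k) z < 1 / (m + 1) := by
    intro m
    rw [frequently_atTop]
    intro N
    by_contra hN
    push_neg at hN
    -- hN : ∀ k ≥ N, w k ≠ z → 1/(m+1) ≤ dist (w k) z
    have key : ∀ j : ℕ, ∃ k, k < N ∧ w k ≠ z ∧ dist (w k) z < 1 / (m + j + 1) := by
      intro j
      obtain ⟨k, hk1, hk2⟩ := h (1 / (m + j + 1)) (by positivity)
      refine ⟨k, ?_, hk1, hk2⟩
      by_contra hkN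
      have h1 : (1 : ℝ) / (m + j + 1) ≤ 1 / (m + 1) := by
        apply one_div_le_one_div_of_le (by positivity)
        linarith [Nat.cast_nonneg (α := ℝ) j]
      exact absurd (lt_of_lt_of_le hk2 h1) (not_lt.2 (hN k (le_of_not_gt hkN) hk1))
    choose kf hkN hkne hkd using key
    have hfib : ∃ y : Fin N, (Set.range fun j : ℕ => (⟨kf j, hkN j⟩ : Fin N)).Infinite ∨ True := ⟨⟨kf 0, hkN 0⟩, Or.inr trivial⟩
    obtain ⟨y, hy⟩ := Finite.exists_infinite_fiber (fun j : ℕ => (⟨kf j, hkN j⟩ : Fin N))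
    have hyinf : ((fun j : ℕ => (⟨kf j, hkN j⟩ : Fin N)) ⁻¹' {y}).Infinite :=
      Set.infinite_coe_iff.1 hy
    have hzero : ∀ ε > 0, dist (w (y : ℕ)) z < ε := by
      intro ε hε
      obtain ⟨J, hJ⟩ := exists_nat_one_div_lt hε
      obtain ⟨j, hjmem, hjgt⟩ := hyinf.exists_gt J
      have hkj : kf j = (y : ℕ) := by
        have : (⟨kf j, hkN j⟩ : Fin N) = y := hjmem
        exact congrArg Fin.val this
      have h2 : dist (w (kf j)) z < 1 / (m + j + 1) := hkd j
      have h3 : (1 : ℝ) / (m + j + 1) ≤ 1 / (J + 1) := by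
        apply one_div_le_one_div_of_le (by positivity)
        have hj' : (J : ℝ) < j := by exact_mod_cast hjgt
        linarith [Nat.cast_nonneg (α := ℝ) m]
      calc dist (w (y : ℕ)) z = dist (w (kf j)) z := by rw [hkj]
        _ < 1 / (m + j + 1) := h2
        _ ≤ 1 / (J + 1) := h3
        _ < ε := hJ
    have : w (y : ℕ) = z := by
      by_contra hne
      have hd : 0 < dist (w (y : ℕ)) z := dist_pos.2 hne
      exact absurd (hzero _ hd) (lt_irrefl _)
    obtain ⟨j, hjmem, _⟩ := hyinf.exists_gt 0
    have hkj : kf j = (y : ℕ) := congrArg Fin.val (hjmem : _)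
    exact hkne j (hkj ▸ this)
  obtain ⟨σ, hσ, hσP⟩ := extraction_forall_of_frequently hfreq
  refine hncs z σ hσ ?_
  rw [Metric.tendsto_atTop]
  intro ε hε
  obtain ⟨J, hJ⟩ := exists_nat_one_div_lt hε
  refine ⟨J, fun m hm => ?_⟩
  have h2 := (hσP m).2
  have h3 : (1 : ℝ) / (m + 1) ≤ 1 / (J + 1) := by
    apply one_div_le_one_div_of_le (by positivity)
    exact_mod_cast Nat.succ_le_succ hm
  calc dist ((w ∘ σ) m) z < 1 / (m + 1) := h2
    _ ≤ 1 / (J + 1) := h3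
    _ < ε := hJ

theorem aux_metric {X : Type*} [MetricSpace X] (φ : ℕ → C(X, ℝ))
    (hfact : ∀ f : C(X, ℝ), (∃ C : ℝ, ∀ x, |f x| ≤ C) →
      ∃ (n : ℕ) (G : C((Fin n → ℝ), ℝ)), ∀ x, f x = G (fun i => φ i x)) :
    LocallyCompactSpace X := by
  classical
  by_contra hLC
  obtain ⟨x₀, N, hN, hnc⟩ : ∃ (x : X) (n : Set X), n ∈ 𝓝 x ∧ ∀ s ∈ 𝓝 x, s ⊆ n → ¬ IsCompact s := by
    by_contra hco
    push_neg at hco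
    exact hLC ⟨fun x n hn => hco x n hn⟩
  obtain ⟨ρ, hρ, hρball⟩ : ∃ ρ > 0, Metric.closedBall x₀ ρ ⊆ N := by
    obtain ⟨ε, hε, hball⟩ := Metric.mem_nhds_iff.1 hN
    exact ⟨ε / 2, by positivity,
      subset_trans (Metric.closedBall_subset_ball (by linarith)) hball⟩
  -- Master lemma: bad sequences inside arbitrarily small closed neighborhoods,
  -- with convergent images under the first n functions.
  have hB : ∀ (n : ℕ) (r : ℝ), ∃ wc : (ℕ → X) × ℝ, 0 < r → r ≤ ρ →
      (∀ k, dist (wc.1 k) x₀ ≤ r) ∧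
      Function.Injective wc.1 ∧
      (∀ (z : X) (σ : ℕ → ℕ), StrictMono σ → ¬ Tendsto (wc.1 ∘ σ) atTop (𝓝 z)) ∧
      (0 < wc.2 ∧ ∀ k, wc.2 ≤ dist (wc.1 k) x₀) ∧
      ∃ p : Fin n → ℝ, Tendsto (fun k => fun i : Fin n => φ i (wc.1 k)) atTop (𝓝 p) := by
    intro n r
    by_cases hr : 0 < r ∧ r ≤ ρ
    swap
    · exact ⟨⟨fun _ => x₀, 1⟩, fun h1 h2 => absurd ⟨h1, h2⟩ hr⟩
    obtain ⟨hr1, hr2⟩ := hr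
    set A : Set X := Metric.closedBall x₀ r ∩ ⋂ i : Fin n, {x | dist (φ i x) (φ i x₀) ≤ 1} with hA
    have hAclosed : IsClosed A :=
      Metric.isClosed_closedBall.inter (isClosed_iInter fun i =>
        isClosed_le ((φ i).continuous.dist continuous_const) continuous_const)
    have hAmem : A ∈ 𝓝 x₀ := by
      refine Filter.inter_mem (Metric.closedBall_mem_nhds x₀ hr1) ?_
      rw [Filter.iInter_mem]
      intro i
      have hop : IsOpen {x | dist (φ i x) (φ i x₀) < 1} :=
        isOpen_lt ((φ i).continuous.dist continuous_const) continuous_const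
      exact Filter.mem_of_superset (hop.mem_nhds (by simp)) (fun x hx => le_of_lt (show dist (φ i x) (φ i x₀) < 1 from hx))
    have hAsub : A ⊆ N := fun x hx => hρball (Metric.closedBall_subset_closedBall hr2 hx.1)
    have hAnsc : ¬ IsSeqCompact A := fun h => (hnc A hAmem hAsub) h.isCompact
    unfold IsSeqCompact at hAnsc
    push_neg at hAnsc
    obtain ⟨u, humem, hubad⟩ := hAnsc
    have huncs : ∀ (z : X) (σ : ℕ → ℕ), StrictMono σ → ¬ Tendsto (u ∘ σ) atTop (𝓝 z) := by
      intro z σ hσ ht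
      have hz : z ∈ A := hAclosed.mem_of_tendsto ht (Filter.Eventually.of_forall fun m => humem (σ m))
      exact hubad z hz σ hσ ht
    have hfib : ∀ z : X, {k | u k = z}.Finite := by
      intro z
      by_contra hinf
      have hinf' : {k | u k = z}.Infinite := hinf
      have hfr : ∃ᶠ k in atTop, u k = z := by
        rw [frequently_atTop]
        intro M
        obtain ⟨b, hb, hbM⟩ := hinf'.exists_gt M
        exact ⟨b, le_of_lt hbM, hb⟩
      obtain ⟨σ, hσ, hσP⟩ := extraction_of_frequently_atTop hfr
      refine huncs z σ hσ ?_
      have he : u ∘ σ = fun _ => z := funext fun m => hσP m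
      rw [he]; exact tendsto_const_nhds
    have hstep : ∀ (m : ℕ) (F : Finset X), ∃ k, m ≤ k ∧ u k ∉ F ∧ u k ≠ x₀ := by
      intro m F
      have hfin : {k | u k ∈ insert x₀ (F : Set X)}.Finite := by
        have he : {k | u k ∈ insert x₀ (F : Set X)} = ⋃ z ∈ insert x₀ (F : Set X), {k | u k = z} := by
          ext k; simp
        rw [he]
        exact Set.Finite.biUnion ((F.finite_toSet).insert x₀) fun z _ => hfib z
      obtain ⟨B, hBub⟩ := hfin.bddAbove
      refine ⟨max m (B + 1), le_max_left _ _, ?_, ?_⟩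
      · intro hmem
        have : max m (B + 1) ≤ B := hBub (Set.mem_insert_of_mem _ hmem)
        omega
      · intro heq
        have : max m (B + 1) ≤ B := hBub (by rw [Set.mem_setOf_eq, heq]; exact Set.mem_insert _ _)
        omega
    let T : ℕ → ℕ × Finset X := fun m => Nat.rec
      ((hstep 0 ∅).choose, {u (hstep 0 ∅).choose})
      (fun _ prev => ((hstep (prev.1 + 1) prev.2).choose,
        insert (u ((hstep (prev.1 + 1) prev.2).choose)) prev.2)) m
    have hTsucc : ∀ m, T (m + 1) = ((hstep ((T m).1 + 1) (T m).2).choose,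
        insert (u ((hstep ((T m).1 + 1) (T m).2).choose)) (T m).2) := fun m => rfl
    let τ : ℕ → ℕ := fun m => (T m).1
    have hτmono : StrictMono τ := by
      apply strictMono_nat_of_lt_succ
      intro m
      have h := (hstep ((T m).1 + 1) (T m).2).choose_spec.1
      show (T m).1 < (T (m + 1)).1
      rw [hTsucc m]
      omega
    have hmemT : ∀ m j, j ≤ m → u (τ j) ∈ (T m).2 := by
      intro m
      induction m with
      | zero =>
        intro j hj
        interval_cases j
        exact Finset.mem_singleton_self _
      | succ m ih =>
        intro j hj
        show u (τ j) ∈ (T (m + 1)).2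
        rw [hTsucc m]
        rcases Nat.lt_succ_iff_lt_or_eq.1 (Nat.lt_succ_of_le hj) with h | rfl
        · exact Finset.mem_insert_of_mem (ih j (Nat.lt_succ_iff.1 h))
        · have he : τ (m + 1) = (hstep ((T m).1 + 1) (T m).2).choose := by
            show (T (m + 1)).1 = _; rw [hTsucc m]
          rw [he]
          exact Finset.mem_insert_self _ _
    have hτne : ∀ m, u (τ m) ≠ x₀ := by
      intro m
      cases m with
      | zero => exact (hstep 0 ∅).choose_spec.2.2
      | succ m =>
        have he : τ (m + 1) = (hstep ((T m).1 + 1) (T m).2).choose := by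
          show (T (m + 1)).1 = _; rw [hTsucc m]
        rw [he]
        exact (hstep ((T m).1 + 1) (T m).2).choose_spec.2.2
    have hτinj : Function.Injective (u ∘ τ) := by
      have key : ∀ j k, j < k → u (τ j) ≠ u (τ k) := by
        intro j k hjk
        obtain ⟨k', rfl⟩ : ∃ k', k = k' + 1 := ⟨k - 1, by omega⟩
        have h1 : u (τ j) ∈ (T k').2 := hmemT k' j (by omega)
        have h2 : u (τ (k' + 1)) ∉ (T k').2 := by
          have he : τ (k' + 1) = (hstep ((T k').1 + 1) (T k').2).choose := by
            show (T (k' + 1)).1 = _; rw [hTsucc k']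
          rw [he]
          exact (hstep ((T k').1 + 1) (T k').2).choose_spec.2.1
        intro heq
        exact h2 (heq ▸ h1)
      intro a b hab
      by_contra hne
      rcases Nat.lt_or_ge a b with h | h
      · exact key a b h hab
      · exact key b a (by omega) hab.symm
    have hvncs : ∀ (z : X) (σ : ℕ → ℕ), StrictMono σ → ¬ Tendsto ((u ∘ τ) ∘ σ) atTop (𝓝 z) :=
      fun z σ hσ ht => huncs z (τ ∘ σ) (hτmono.comp hσ) ht
    have hKcpt : IsCompact (Set.univ.pi fun i : Fin n => Set.Icc (φ i x₀ - 1) (φ i x₀ + 1)) :=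
      isCompact_univ_pi fun i => isCompact_Icc
    have hvmemK : ∀ k, (fun i : Fin n => φ i (u (τ k))) ∈
        (Set.univ.pi fun i : Fin n => Set.Icc (φ i x₀ - 1) (φ i x₀ + 1)) := by
      intro k
      rw [Set.mem_univ_pi]
      intro i
      have hm := (humem (τ k)).2
      rw [Set.mem_iInter] at hm
      have h1 : dist (φ i (u (τ k))) (φ i x₀) ≤ 1 := hm i
      rw [Real.dist_eq, abs_le] at h1
      exact ⟨by linarith [h1.1], by linarith [h1.2]⟩
    obtain ⟨p, -, σ, hσ, hσt⟩ := hKcpt.tendsto_subseq hvmemK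
    set w' : ℕ → X := (u ∘ τ) ∘ σ with hw'
    have hwncs : ∀ (z : X) (σ' : ℕ → ℕ), StrictMono σ' → ¬ Tendsto (w' ∘ σ') atTop (𝓝 z) :=
      fun z σ' hσ' ht => hvncs z (σ ∘ σ') (hσ.comp hσ') ht
    have hwne : ∀ k, w' k ≠ x₀ := fun k => hτne (σ k)
    obtain ⟨c, hc, hcd⟩ := ncs_apart hwncs x₀
    refine ⟨⟨w', c⟩, fun _ _ => ?_⟩
    refine ⟨fun k => ?_, hτinj.comp hσ.injective, hwncs, ⟨hc, fun k => hcd k (hwne k)⟩, p, hσt⟩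
    have hmem := (humem (τ (σ k))).1
    rwa [Metric.mem_closedBall] at hmem
  -- recursive construction of the fan
  let FC : ℕ → ℝ → (ℕ → X) × ℝ := fun n r => (hB n r).choose
  let rad : ℕ → ℝ := fun n => Nat.rec ρ (fun n rn => min rn (FC n rn).2 / 2) n
  have hradsucc : ∀ n, rad (n + 1) = min (rad n) (FC n (rad n)).2 / 2 := fun n => rfl
  have hradpos : ∀ n, 0 < rad n ∧ rad n ≤ ρ := by
    intro n
    induction n with
    | zero => exact ⟨hρ, le_rfl⟩
    | succ n ih =>
      have hs := (hB n (rad n)).choose_spec ih.1 ih.2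
      have hcpos : 0 < (FC n (rad n)).2 := hs.2.2.2.1.1
      rw [hradsucc n]
      constructor
      · have hm := lt_min ih.1 hcpos
        linarith
      · have hm := min_le_left (rad n) (FC n (rad n)).2
        linarith [ih.1, ih.2]
  let w : ℕ → ℕ → X := fun n => (FC n (rad n)).1
  let cc : ℕ → ℝ := fun n => (FC n (rad n)).2
  have hspec : ∀ n, (∀ k, dist (w n k) x₀ ≤ rad n) ∧ Function.Injective (w n) ∧
      (∀ (z : X) (σ : ℕ → ℕ), StrictMono σ → ¬ Tendsto (w n ∘ σ) atTop (𝓝 z)) ∧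
      (0 < cc n ∧ ∀ k, cc n ≤ dist (w n k) x₀) ∧
      ∃ p : Fin n → ℝ, Tendsto (fun k => fun i : Fin n => φ i (w n k)) atTop (𝓝 p) :=
    fun n => (hB n (rad n)).choose_spec (hradpos n).1 (hradpos n).2
  have hrad2 : ∀ n, 2 * rad (n + 1) ≤ cc n := by
    intro n
    have hmr := min_le_right (rad n) (FC n (rad n)).2
    have h1 := hradsucc n
    show 2 * rad (n + 1) ≤ (FC n (rad n)).2
    rw [h1]
    linarith
  have hradmono : ∀ m n, m ≤ n → rad n ≤ rad m := by
    have h : ∀ n, rad (n + 1) ≤ rad n := by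
      intro n
      rw [hradsucc n]
      have hmr := min_le_left (rad n) (FC n (rad n)).2
      linarith [(hradpos n).1]
    exact fun m n hmn => antitone_nat_of_succ_le h hmn
  have hradsmall : ∀ n, rad n ≤ ρ / 2 ^ n := by
    intro n
    induction n with
    | zero => simpa using (hradpos 0).2
    | succ n ih =>
      rw [hradsucc n]
      have h1 := min_le_left (rad n) (FC n (rad n)).2
      have h2 : ρ / 2 ^ n / 2 = ρ / 2 ^ (n + 1) := by
        rw [pow_succ]; ring
      rw [← h2]
      linarith
  have fact1 : ∀ i nn, i < nn → ∀ k j, rad nn ≤ dist (w nn k) (w i j) := by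
    intro i nn hin k j
    have h1 : dist (w nn k) x₀ ≤ rad nn := (hspec nn).1 k
    have h2 : cc i ≤ dist (w i j) x₀ := (hspec i).2.2.2.1.2 j
    have h3 : 2 * rad (i + 1) ≤ cc i := hrad2 i
    have h4 : rad nn ≤ rad (i + 1) := hradmono _ _ hin
    have htr : dist (w i j) x₀ ≤ dist (w i j) (w nn k) + dist (w nn k) x₀ := dist_triangle _ _ _
    have hcm : dist (w nn k) (w i j) = dist (w i j) (w nn k) := dist_comm _ _
    linarith
  have fact2 : ∀ nn i, nn < i → ∀ k j, cc nn / 2 ≤ dist (w nn k) (w i j) := by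
    intro nn i hni k j
    have h1 : dist (w i j) x₀ ≤ rad i := (hspec i).1 j
    have h2 : cc nn ≤ dist (w nn k) x₀ := (hspec nn).2.2.2.1.2 k
    have h4 : rad i ≤ rad (nn + 1) := hradmono _ _ hni
    have h3 : 2 * rad (nn + 1) ≤ cc nn := hrad2 nn
    have htr : dist (w nn k) x₀ ≤ dist (w nn k) (w i j) + dist (w i j) x₀ := dist_triangle _ _ _
    linarith
  have huniq : ∀ n k m j, w n k = w m j → n = m ∧ k = j := by
    intro n k m j he
    have hnm : n = m := by
      by_contra hne
      rcases Nat.lt_or_ge n m with h | h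
      · have hf := fact2 n m h k j
        rw [he, dist_self] at hf
        linarith [(hspec n).2.2.2.1.1]
      · have h' : m < n := by omega
        have hf := fact1 m n h' k j
        rw [he, dist_self] at hf
        linarith [(hradpos n).1]
    subst hnm
    exact ⟨rfl, (hspec n).2.1 he⟩
  have hx₀notin : ∀ n k, w n k ≠ x₀ := by
    intro n k he
    have h2 := (hspec n).2.2.2.1.2 k
    rw [he, dist_self] at h2
    linarith [(hspec n).2.2.2.1.1]
  set Wset : Set X := {x₀} ∪ ⋃ n, Set.range (w n) with hWset
  have hWmem : ∀ n k, w n k ∈ Wset := fun n k => Or.inr (mem_iUnion.2 ⟨n, ⟨k, rfl⟩⟩)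
  have hx₀mem : x₀ ∈ Wset := Or.inl rfl
  have hradlim : ∀ d : ℝ, 0 < d → ∃ n₀ : ℕ, ∀ n, n₀ ≤ n → rad n < d := by
    intro d hd
    obtain ⟨n₀, hn₀⟩ := pow_unbounded_of_one_lt (ρ / d) (one_lt_two (α := ℝ))
    refine ⟨n₀, fun n hn => ?_⟩
    have h1 : rad n ≤ ρ / 2 ^ n := hradsmall n
    have h2 : (2 : ℝ) ^ n₀ ≤ 2 ^ n := pow_le_pow_right₀ (by norm_num) hn
    have h3 : ρ / d < 2 ^ n := lt_of_lt_of_le hn₀ h2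
    have hpow : (0 : ℝ) < 2 ^ n := by positivity
    have h4 : ρ / 2 ^ n < d := by
      rw [div_lt_iff₀ hpow, mul_comm]
      exact (div_lt_iff₀ hd).1 h3
    linarith
  have hWclosed : IsClosed Wset := by
    rw [← isOpen_compl_iff, Metric.isOpen_iff]
    intro z hz
    have hz1 : z ≠ x₀ := fun h => hz (Or.inl (by rw [h]; rfl))
    have hz2 : ∀ n k, w n k ≠ z := fun n k he => hz (Or.inr (mem_iUnion.2 ⟨n, ⟨k, he⟩⟩))
    have hdz : 0 < dist z x₀ := dist_pos.2 hz1
    obtain ⟨n₀, hn₀⟩ := hradlim (dist z x₀ / 2) (by linarith)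
    have hEps : ∀ n, ∃ ε > 0, ∀ k, ε ≤ dist (w n k) z := by
      intro n
      obtain ⟨ε, hε, hεle⟩ := ncs_apart (hspec n).2.2.1 z
      exact ⟨ε, hε, fun k => hεle k (hz2 n k)⟩
    choose εf hεf hεfle using hEps
    obtain ⟨δ, hδ, hδle⟩ := exists_pos_lb εf n₀ (fun n _ => hεf n)
    refine ⟨min δ (dist z x₀ / 2), lt_min hδ (by linarith), ?_⟩
    intro y hy
    rw [Metric.mem_ball] at hy
    intro hymem
    rcases hymem with hy0 | hyu
    · rw [mem_singleton_iff] at hy0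
      rw [hy0, dist_comm] at hy
      have : min δ (dist z x₀ / 2) ≤ dist z x₀ / 2 := min_le_right _ _
      linarith
    · rw [mem_iUnion] at hyu
      obtain ⟨n, k, rfl⟩ := hyu
      rcases Nat.lt_or_ge n n₀ with h | h
      · have h1 : δ ≤ dist (w n k) z := le_trans (hδle n h) (hεfle n k)
        have h2 : min δ (dist z x₀ / 2) ≤ δ := min_le_left _ _
        linarith
      · have h1 : rad n < dist z x₀ / 2 := hn₀ n h
        have h2 : dist (w n k) x₀ ≤ rad n := (hspec n).1 k
        have htr : dist z x₀ ≤ dist z (w n k) + dist (w n k) x₀ := dist_triangle _ _ _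
        have hcm : dist (w n k) z = dist z (w n k) := dist_comm _ _
        have h3 : min δ (dist z x₀ / 2) ≤ dist z x₀ / 2 := min_le_right _ _
        linarith
  let g : X → ℝ := fun x =>
    if h : ∃ q : ℕ × ℕ, w q.1 q.2 = x then
      (2⁻¹ : ℝ) ^ (h.choose.1) * ((h.choose.2 % 2 : ℕ) : ℝ) else 0
  have hgw : ∀ n k, g (w n k) = (2⁻¹ : ℝ) ^ n * ((k % 2 : ℕ) : ℝ) := by
    intro n k
    have hex : ∃ q : ℕ × ℕ, w q.1 q.2 = w n k := ⟨(n, k), rfl⟩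
    have h1 : g (w n k) = (2⁻¹ : ℝ) ^ (hex.choose.1) * ((hex.choose.2 % 2 : ℕ) : ℝ) :=
      dif_pos hex
    obtain ⟨hn, hk⟩ := huniq hex.choose.1 hex.choose.2 n k hex.choose_spec
    rw [h1, hn, hk]
  have hgx₀ : g x₀ = 0 := dif_neg (by rintro ⟨⟨n, k⟩, hq⟩; exact hx₀notin n k hq)
  have hg01 : ∀ x, 0 ≤ g x ∧ g x ≤ 1 := by
    intro x
    by_cases h : ∃ q : ℕ × ℕ, w q.1 q.2 = x
    · have h1 : g x = (2⁻¹ : ℝ) ^ (h.choose.1) * ((h.choose.2 % 2 : ℕ) : ℝ) := dif_pos h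
      rw [h1]
      have h2 : (h.choose.2 % 2 : ℕ) ≤ 1 := by omega
      have h3 : ((h.choose.2 % 2 : ℕ) : ℝ) ≤ 1 := by exact_mod_cast h2
      have h3' : (0 : ℝ) ≤ ((h.choose.2 % 2 : ℕ) : ℝ) := Nat.cast_nonneg _
      have h4 : (2⁻¹ : ℝ) ^ h.choose.1 ≤ 1 := pow_le_one₀ (by norm_num) (by norm_num)
      have h5 : (0 : ℝ) ≤ (2⁻¹ : ℝ) ^ h.choose.1 := by positivity
      constructor
      · positivity
      · nlinarith
    · have h1 : g x = 0 := dif_neg h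
      rw [h1]; norm_num
  have hgble : ∀ n k, g (w n k) ≤ (2⁻¹ : ℝ) ^ n := by
    intro n k
    rw [hgw n k]
    have h2 : (k % 2 : ℕ) ≤ 1 := by omega
    have h3 : ((k % 2 : ℕ) : ℝ) ≤ 1 := by exact_mod_cast h2
    have h5 : (0 : ℝ) ≤ (2⁻¹ : ℝ) ^ n := by positivity
    nlinarith [Nat.cast_nonneg (α := ℝ) (k % 2)]
  have hgcont : Continuous (Wset.restrict g) := by
    rw [Metric.continuous_iff]
    rintro ⟨x, hx⟩ ε hε
    rcases hx with hx0 | hxu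
    · -- continuity at the vertex
      rw [mem_singleton_iff] at hx0
      have hx0' : x₀ = x := hx0.symm
      subst hx0'
      obtain ⟨n₀, hn₀⟩ := exists_pow_lt_of_lt_one hε (by norm_num : (2⁻¹ : ℝ) < 1)
      obtain ⟨δ, hδ, hδle⟩ := exists_pos_lb cc n₀ (fun n _ => (hspec n).2.2.2.1.1)
      refine ⟨δ, hδ, ?_⟩
      rintro ⟨y, hy⟩ hdist
      rw [Subtype.dist_eq] at hdist
      have hdist2 : dist y x₀ < δ := hdist
      show dist (g y) (g x₀) < ε
      rw [Real.dist_eq, hgx₀, sub_zero, abs_of_nonneg (hg01 y).1]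
      rcases hy with hy0 | hyu
      · rw [mem_singleton_iff] at hy0
        rw [hy0, hgx₀]; exact hε
      · rw [mem_iUnion] at hyu
        obtain ⟨n, k, rfl⟩ := hyu
        have hn : n₀ ≤ n := by
          by_contra hlt
          have h1 : δ ≤ cc n := hδle n (by omega)
          have h2 : cc n ≤ dist (w n k) x₀ := (hspec n).2.2.2.1.2 k
          linarith
        have h1 : g (w n k) ≤ (2⁻¹ : ℝ) ^ n := hgble n k
        have h2 : (2⁻¹ : ℝ) ^ n ≤ (2⁻¹ : ℝ) ^ n₀ :=
          pow_le_pow_of_le_one (by norm_num) (by norm_num) hn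
        linarith
    · -- continuity at fan points: they are isolated
      rw [mem_iUnion] at hxu
      obtain ⟨n, k, rfl⟩ := hxu
      obtain ⟨εo, hεo, hεole⟩ := ncs_apart (hspec n).2.2.1 (w n k)
      have hcpos : 0 < cc n := (hspec n).2.2.2.1.1
      have hrpos : 0 < rad n := (hradpos n).1
      refine ⟨min (min (cc n) (rad n)) (min (cc n / 2) εo),
        lt_min (lt_min hcpos hrpos) (lt_min (by linarith) hεo), ?_⟩
      rintro ⟨y, hy⟩ hdist
      rw [Subtype.dist_eq] at hdist
      have hdist2 : dist y (w n k) < min (min (cc n) (rad n)) (min (cc n / 2) εo) := hdist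
      show dist (g y) (g (w n k)) < ε
      have hyx : y = w n k := by
        rcases hy with hy0 | hyu
        · rw [mem_singleton_iff] at hy0
          exfalso
          rw [hy0] at hdist2
          have h2 : cc n ≤ dist (w n k) x₀ := (hspec n).2.2.2.1.2 k
          have hcm : dist x₀ (w n k) = dist (w n k) x₀ := dist_comm _ _
          have h3 : min (min (cc n) (rad n)) (min (cc n / 2) εo) ≤ cc n :=
            le_trans (min_le_left _ _) (min_le_left _ _)
          linarith
        · rw [mem_iUnion] at hyu
          obtain ⟨m, j, rfl⟩ := hyu
          rcases Nat.lt_or_ge m n with h | h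
          · exfalso
            have hf := fact1 m n h k j
            have hcm : dist (w m j) (w n k) = dist (w n k) (w m j) := dist_comm _ _
            have h3 : min (min (cc n) (rad n)) (min (cc n / 2) εo) ≤ rad n :=
              le_trans (min_le_left _ _) (min_le_right _ _)
            linarith
          rcases Nat.lt_or_ge n m with h' | h'
          · exfalso
            have hf := fact2 n m h' k j
            have hcm : dist (w m j) (w n k) = dist (w n k) (w m j) := dist_comm _ _
            have h3 : min (min (cc n) (rad n)) (min (cc n / 2) εo) ≤ cc n / 2 :=
              le_trans (min_le_right _ _) (min_le_left _ _)
            linarith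
          have hmn : m = n := by omega
          subst hmn
          by_cases hjk : j = k
          · rw [hjk]
          · exfalso
            have hne : w m j ≠ w m k := fun he => hjk ((hspec m).2.1 he)
            have hf := hεole j hne
            have h3 : min (min (cc m) (rad m)) (min (cc m / 2) εo) ≤ εo :=
              le_trans (min_le_right _ _) (min_le_right _ _)
            linarith
      rw [hyx, dist_self]
      exact hε
  obtain ⟨G₀, hG₀⟩ := ContinuousMap.exists_restrict_eq (Y := ℝ) hWclosed ⟨Wset.restrict g, hgcont⟩
  have hG₀val : ∀ x (hx : x ∈ Wset), G₀ x = g x := by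
    intro x hx
    have h := ContinuousMap.congr_fun hG₀ ⟨x, hx⟩
    exact h
  let f : C(X, ℝ) := ⟨fun x => max 0 (min (G₀ x) 1),
    continuous_const.max ((map_continuous G₀).min continuous_const)⟩
  have hfB : ∃ C : ℝ, ∀ x, |f x| ≤ C := by
    refine ⟨1, fun x => ?_⟩
    simp only [f, ContinuousMap.coe_mk]
    rw [abs_le]
    constructor
    · have := le_max_left (0 : ℝ) (min (G₀ x) 1)
      linarith
    · exact max_le (by norm_num) (min_le_right _ _)
  have hfW : ∀ x, x ∈ Wset → f x = g x := by
    intro x hx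
    simp only [f, ContinuousMap.coe_mk]
    rw [hG₀val x hx, min_eq_left (hg01 x).2, max_eq_right (hg01 x).1]
  obtain ⟨m, G, hfG⟩ := hfact f hfB
  obtain ⟨p, hp⟩ := (hspec m).2.2.2.2
  have hGlim : Tendsto (fun k => f (w m k)) atTop (𝓝 (G p)) := by
    have h1 := (G.continuous.tendsto p).comp hp
    have he : (fun k => f (w m k)) = fun k => G (fun i : Fin m => φ i (w m k)) :=
      funext fun k => hfG (w m k)
    rw [he]
    exact h1
  have hval : ∀ k, f (w m k) = (2⁻¹ : ℝ) ^ m * ((k % 2 : ℕ) : ℝ) :=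
    fun k => (hfW _ (hWmem m k)).trans (hgw m k)
  have heven : Tendsto (fun j : ℕ => f (w m (2 * j))) atTop (𝓝 (G p)) :=
    hGlim.comp (tendsto_atTop_mono (fun j => by simp only [id_eq]; omega) tendsto_id)
  have hodd : Tendsto (fun j : ℕ => f (w m (2 * j + 1))) atTop (𝓝 (G p)) :=
    hGlim.comp (tendsto_atTop_mono (fun j => by simp only [id_eq]; omega) tendsto_id)
  have he0 : (fun j : ℕ => f (w m (2 * j))) = fun _ => (0 : ℝ) := by
    funext j
    rw [hval]
    have h : (2 * j) % 2 = 0 := by omega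
    rw [h]
    norm_num
  have ho1 : (fun j : ℕ => f (w m (2 * j + 1))) = fun _ => (2⁻¹ : ℝ) ^ m := by
    funext j
    rw [hval]
    have h : (2 * j + 1) % 2 = 1 := by omega
    rw [h]
    norm_num
  rw [he0] at heven
  rw [ho1] at hodd
  have h0 : (0 : ℝ) = G p := tendsto_nhds_unique tendsto_const_nhds heven
  have h1 : (2⁻¹ : ℝ) ^ m = G p := tendsto_nhds_unique tendsto_const_nhds hodd
  have : (2⁻¹ : ℝ) ^ m = 0 := by rw [h1, ← h0]
  have hpos : (0 : ℝ) < (2⁻¹ : ℝ) ^ m := by positivity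
  linarith

/-- A completely regular T1 space with a countable generating* family is locally
compact. -/
theorem stmt6 {X : Type*} [TopologicalSpace X] [T1Space X] [CompletelyRegularSpace X]
    (Φ : Set C(X, ℝ)) (hc : Φ.Countable) (M : OpFamily) (hΦ : IsGeneratingStar Φ M) :
    LocallyCompactSpace X := by
  classical
  have hcount : (insert (0 : C(X, ℝ)) Φ).Countable := hc.insert _
  obtain ⟨φ, hφr⟩ := hcount.exists_eq_range (insert_nonempty _ _)
  have hmemφ : ∀ ψ ∈ Φ, ∃ k : ℕ, φ k = ψ := by
    intro ψ hψ
    have hm : ψ ∈ range φ := hφr ▸ mem_insert_of_mem _ hψ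
    rwa [mem_range] at hm
  have hfact0 : ∀ (f : X → ℝ), Generated Φ M f →
      ∃ (n : ℕ) (G : C((Fin n → ℝ), ℝ)), ∀ x, f x = G (fun i => φ i x) := by
    intro f hf
    induction hf with
    | base ψ hψ =>
      obtain ⟨k, hk⟩ := hmemφ ψ hψ
      refine ⟨k + 1, ⟨fun v => v ⟨k, Nat.lt_succ_self k⟩, continuous_apply _⟩, fun x => ?_⟩
      show ψ x = φ ((⟨k, Nat.lt_succ_self k⟩ : Fin (k + 1)) : ℕ) x
      rw [← hk]
    | post gc f' hf' ih =>
      obtain ⟨n, G, hG⟩ := ih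
      refine ⟨n, gc.comp G, fun x => ?_⟩
      show gc (f' x) = gc (G (fun i => φ i x))
      rw [hG x]
    | op p hp fs hfs ih =>
      choose n G hG using ih
      have hle : ∀ i, n i ≤ Finset.univ.sup n := fun i => Finset.le_sup (Finset.mem_univ i)
      refine ⟨Finset.univ.sup n,
        ⟨fun v => p.2 (fun i => G i (fun t => v (Fin.castLE (hle i) t))),
          p.2.continuous.comp (continuous_pi fun i => (G i).continuous.comp
            (continuous_pi fun t => continuous_apply _))⟩, fun x => ?_⟩
      show p.2 (fun i => fs i x) = p.2 (fun i => G i (fun t => φ ((Fin.castLE (hle i) t : Fin (Finset.univ.sup n)) : ℕ) x))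
      congr 1
      funext i
      rw [hG i]
      congr 1
  have hsepf : ∀ (x : X) (K : Set X), IsClosed K → x ∉ K →
      ∃ (n : ℕ) (G : C((Fin n → ℝ), ℝ)),
        G (fun i => φ i x) < 1/2 ∧ ∀ y ∈ K, G (fun i => φ i y) = 1 := by
    intro x K hK hxK
    obtain ⟨v, hvc, hvx, hvK⟩ := CompletelyRegularSpace.completely_regular x K hK hxK
    let f' : C(X, ℝ) := ⟨fun y => (v y : ℝ), continuous_subtype_val.comp hvc⟩
    have hBdd : BddFun (f' : X → ℝ) := by
      refine ⟨1, fun y => ?_⟩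
      rw [abs_le]
      have h1 := (v y).2.1
      have h2 := (v y).2.2
      constructor
      · show (-1 : ℝ) ≤ (v y : ℝ); linarith
      · exact h2
    obtain ⟨n, G, hG⟩ := hfact0 f' (hΦ f' hBdd)
    refine ⟨n, G, ?_, ?_⟩
    · rw [← hG x]
      show (v x : ℝ) < 1/2
      rw [hvx]
      norm_num
    · intro y hy
      rw [← hG y]
      show (v y : ℝ) = 1
      rw [hvK hy]
      rfl
  let E : X → ℕ → ℝ := fun x n => φ n x
  have hEcont : Continuous E := continuous_pi fun n => (φ n).continuous
  have hEembed : Topology.IsEmbedding E := by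
    refine ⟨isInducing_iff_nhds.2 fun x => le_antisymm ?_ ?_, ?_⟩
    · exact map_le_iff_le_comap.1 (hEcont.tendsto x)
    · intro U hU
      rw [mem_comap]
      obtain ⟨V, hVo, hxV, hVU⟩ : ∃ V, IsOpen V ∧ x ∈ V ∧ V ⊆ U := by
        obtain ⟨V, hVU, hVo, hxV⟩ := mem_nhds_iff.1 hU
        exact ⟨V, hVo, hxV, hVU⟩
      obtain ⟨n, G, hGx, hGK⟩ := hsepf x Vᶜ hVo.isClosed_compl (by simp [hxV])
      refine ⟨{u : ℕ → ℝ | G (fun i : Fin n => u i) < 1/2}, ?_, ?_⟩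
      · exact (isOpen_lt (G.continuous.comp
          (continuous_pi fun i : Fin n => continuous_apply ((i : ℕ)))) continuous_const).mem_nhds hGx
      · intro y hy
        refine hVU (by_contra fun hyV => ?_)
        have h1 : G (fun i : Fin n => φ i y) = 1 := hGK y hyV
        have h2 : G (fun i : Fin n => φ i y) < 1/2 := hy
        linarith
    · intro a b hab
      by_contra hne
      obtain ⟨n, G, hGx, hGK⟩ := hsepf a {b} isClosed_singleton (by simp [hne])
      have h1 : G (fun i : Fin n => φ i b) = 1 := hGK b rfl
      have h2 : (fun i : Fin n => φ i a) = fun i : Fin n => φ i b := by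
        funext i; exact congrFun hab (i : ℕ)
      rw [h2, h1] at hGx
      norm_num at hGx
  have hmetr : TopologicalSpace.MetrizableSpace X := hEembed.metrizableSpace
  letI : MetricSpace X := TopologicalSpace.metrizableSpaceMetric X
  exact aux_metric φ (fun f hf => hfact0 f (hΦ f hf))
end

section
/- A separable metrizable space which is not locally compact contains a closed subspace homeomorphic to the metric fan. -/
open Metric Filter Set Topology

/-- A finite set of positive reals has a positive lower bound. -/
lemma fanAux_min {T : Set ℝ} (hT : T.Finite) (hpos : ∀ x ∈ T, 0 < x) :
    ∃ ε > 0, ∀ x ∈ T, ε ≤ x := by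
  rcases T.eq_empty_or_nonempty with rfl | hne
  · exact ⟨1, one_pos, fun x hx => absurd hx (Set.notMem_empty x)⟩
  · have hne' : hT.toFinset.Nonempty := by
      rwa [← Set.Finite.toFinset_nonempty hT] at hne
    have hmin : hT.toFinset.min' hne' ∈ hT.toFinset := Finset.min'_mem _ _
    exact ⟨_, hpos _ (hT.mem_toFinset.1 hmin),
      fun x hx => Finset.min'_le _ _ (hT.mem_toFinset.2 hx)⟩

/-- From a noncompact closed ball, extract an infinite "closed discrete" subset. -/
lemma fan_exists_discrete {X : Type*} [MetricSpace X] (x₀ : X) (δ : ℝ)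
    (hc : ¬ IsCompact (Metric.closedBall x₀ δ)) :
    ∃ D : Set X, D.Infinite ∧ D ⊆ Metric.closedBall x₀ δ ∧ x₀ ∉ D ∧
      ∀ z : X, ∃ ε > 0, Metric.ball z ε ∩ D ⊆ {z} := by
  have hseq : ¬ IsSeqCompact (Metric.closedBall x₀ δ) := fun hs => hc hs.isCompact
  simp only [IsSeqCompact] at hseq
  push_neg at hseq
  obtain ⟨u, hu, hdiv⟩ := hseq
  have hno : ∀ (a : X) (φ : ℕ → ℕ), StrictMono φ → ¬ Tendsto (u ∘ φ) atTop (𝓝 a) := by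
    intro a φ hφ ht
    have ha : a ∈ Metric.closedBall x₀ δ :=
      Metric.isClosed_closedBall.mem_of_tendsto ht (Eventually.of_forall fun n => hu (φ n))
    exact hdiv a ha φ hφ ht
  have hfib : ∀ a : X, {n : ℕ | u n = a}.Finite := by
    intro a
    by_contra hinf
    obtain ⟨φ, hφ, hP⟩ :=
      Filter.extraction_of_frequently_atTop (Nat.frequently_atTop_iff_infinite.2 hinf)
    refine hno a φ hφ ?_
    have : u ∘ φ = fun _ => a := funext fun n => hP n
    rw [this]
    exact tendsto_const_nhds
  have hrng : (Set.range u).Infinite := by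
    by_contra hfin
    rw [Set.not_infinite] at hfin
    have hsub : (Set.univ : Set ℕ) ⊆ ⋃ a ∈ Set.range u, {n | u n = a} := fun n _ =>
      Set.mem_biUnion (Set.mem_range_self n) rfl
    exact Set.infinite_univ ((hfin.biUnion fun a _ => hfib a).subset hsub)
  have hdisc : ∀ z : X, ∃ ε > 0, Metric.ball z ε ∩ Set.range u ⊆ {z} := by
    intro z
    have key : ∃ ε > 0, {n : ℕ | u n ∈ Metric.ball z ε ∧ u n ≠ z}.Finite := by
      by_contra hk
      push_neg at hk
      have hfreq : ∀ m : ℕ, ∃ᶠ k in atTop,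
          u k ∈ Metric.ball z (1 / (m + 1)) ∧ u k ≠ z := by
        intro m
        refine Nat.frequently_atTop_iff_infinite.2 ?_
        have hpos : (0 : ℝ) < 1 / (m + 1) := by positivity
        exact hk _ hpos
      obtain ⟨φ, hφ, hP⟩ := Filter.extraction_forall_of_frequently hfreq
      refine hno z φ hφ ?_
      refine tendsto_iff_dist_tendsto_zero.2 ?_
      refine squeeze_zero (fun n => dist_nonneg) (fun n => (le_of_lt ?_))
        tendsto_one_div_add_atTop_nhds_zero_nat
      exact Metric.mem_ball.1 (hP n).1
    obtain ⟨ε, hε, hF⟩ := key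
    set T : Set ℝ := (fun w => dist w z) '' ((u '' {n | u n ∈ Metric.ball z ε ∧ u n ≠ z}) \ {z})
      with hT
    have hTfin : T.Finite := (((hF.image u).diff).image _)
    have hTpos : ∀ x ∈ T, 0 < x := by
      rintro x ⟨w, ⟨hw1, hw2⟩, rfl⟩
      exact dist_pos.2 (by simpa using hw2)
    obtain ⟨ε', hε', hle⟩ := fanAux_min hTfin hTpos
    refine ⟨min ε ε', lt_min hε hε', ?_⟩
    rintro w ⟨hwball, n, rfl⟩
    by_contra hne
    have hne' : u n ≠ z := by simpa using hne
    have hball : u n ∈ Metric.ball z ε :=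
      Metric.ball_subset_ball (min_le_left _ _) hwball
    have hmemT : dist (u n) z ∈ T :=
      ⟨u n, ⟨Set.mem_image_of_mem u ⟨hball, hne'⟩, by simpa using hne'⟩, rfl⟩
    have h1 : ε' ≤ dist (u n) z := hle _ hmemT
    have h2 : dist (u n) z < min ε ε' := Metric.mem_ball.1 hwball
    have h3 : dist (u n) z < ε' := lt_of_lt_of_le h2 (min_le_right _ _)
    linarith
  refine ⟨Set.range u \ {x₀}, hrng.diff (Set.finite_singleton x₀),
    fun w hw => ?_, fun hh => hh.2 rfl, fun z => ?_⟩
  · obtain ⟨n, rfl⟩ := hw.1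
    exact hu n
  · obtain ⟨ε, hε, hsub⟩ := hdisc z
    exact ⟨ε, hε, fun w hw => hsub ⟨hw.1, hw.2.1⟩⟩

/-- A separable metrizable space which is not locally compact contains a closed
subspace homeomorphic to the metric fan. -/
theorem stmt7 {X : Type*} [TopologicalSpace X] [TopologicalSpace.MetrizableSpace X]
    [TopologicalSpace.SeparableSpace X] (h : ¬ LocallyCompactSpace X) :
    ∃ e : Fan → X, Topology.IsClosedEmbedding e := by
  letI : MetricSpace X := TopologicalSpace.metrizableSpaceMetric X
  -- extract a point with no compact neighborhoods
  have hX : ¬ ∀ (x : X) (n : Set X), n ∈ nhds x → ∃ s ∈ nhds x, s ⊆ n ∧ IsCompact s :=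
    fun H => h ⟨H⟩
  push_neg at hX
  obtain ⟨x₀, n₀, hn₀, hbad⟩ := hX
  obtain ⟨r₀, hr₀, hr₀sub⟩ := Metric.nhds_basis_closedBall.mem_iff.1 hn₀
  have hnc : ∀ δ : ℝ, 0 < δ → δ ≤ r₀ → ¬ IsCompact (Metric.closedBall x₀ δ) := by
    intro δ hδ hδr
    exact hbad _ (Metric.closedBall_mem_nhds x₀ hδ)
      ((Metric.closedBall_subset_closedBall hδr).trans hr₀sub)
  -- a totalized family of discrete sets
  have hDex : ∀ δ : ℝ, ∃ D : Set X, 0 < δ → δ ≤ r₀ →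
      D.Infinite ∧ D ⊆ Metric.closedBall x₀ δ ∧ x₀ ∉ D ∧
      ∀ z : X, ∃ ε > 0, Metric.ball z ε ∩ D ⊆ {z} := by
    intro δ
    by_cases hδ : 0 < δ ∧ δ ≤ r₀
    · obtain ⟨D, hp⟩ := fan_exists_discrete x₀ δ (hnc δ hδ.1 hδ.2)
      exact ⟨D, fun _ _ => hp⟩
    · exact ⟨∅, fun h1 h2 => absurd ⟨h1, h2⟩ hδ⟩
  choose D hD using hDex
  have hρex : ∀ (δ : ℝ) (z : X), ∃ ε : ℝ, 0 < ε ∧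
      (0 < δ → δ ≤ r₀ → Metric.ball z ε ∩ D δ ⊆ {z}) := by
    intro δ z
    by_cases hδ : 0 < δ ∧ δ ≤ r₀
    · obtain ⟨ε, hε, hsub⟩ := (hD δ hδ.1 hδ.2).2.2.2 z
      exact ⟨ε, hε, fun _ _ => hsub⟩
    · exact ⟨1, one_pos, fun h1 h2 => absurd ⟨h1, h2⟩ hδ⟩
  choose ρ hρ0 hρ using hρex
  -- the decreasing sequence of radii
  set δs : ℕ → ℝ :=
    fun n => Nat.rec (min r₀ 1) (fun m d => min (min d (ρ d x₀)) (1 / (m + 2)) / 2) n with hδs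
  have hδsS : ∀ n, δs (n + 1) = min (min (δs n) (ρ (δs n) x₀)) (1 / (n + 2)) / 2 :=
    fun n => rfl
  have hpos : ∀ n, 0 < δs n := by
    intro n; induction n with
    | zero => exact lt_min hr₀ one_pos
    | succ m ih =>
      rw [hδsS]
      have h1 : (0:ℝ) < 1 / (m + 2) := by positivity
      have := hρ0 (δs m) x₀
      have := lt_min (lt_min ih (hρ0 (δs m) x₀)) h1
      linarith
  have hhalf : ∀ n, 2 * δs (n + 1) ≤ δs n := by
    intro n
    rw [hδsS]
    have h1 : min (min (δs n) (ρ (δs n) x₀)) (1 / (n + 2)) ≤ δs n :=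
      le_trans (min_le_left _ _) (min_le_left _ _)
    linarith
  have hle : ∀ n, δs (n + 1) ≤ δs n := by
    intro n
    have := hhalf n
    have := hpos (n + 1)
    linarith
  have hle_r₀ : ∀ n, δs n ≤ r₀ := by
    intro n
    induction n with
    | zero => exact min_le_left _ _
    | succ m ih => exact le_trans (hle m) ih
  have hanti : Antitone δs := antitone_nat_of_succ_le hle
  have hρle : ∀ n, 2 * δs (n + 1) ≤ ρ (δs n) x₀ := by
    intro n
    rw [hδsS]
    have h1 : min (min (δs n) (ρ (δs n) x₀)) (1 / (n + 2)) ≤ ρ (δs n) x₀ :=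
      le_trans (min_le_left _ _) (min_le_right _ _)
    linarith
  have hbound : ∀ n, δs n ≤ 1 / (n + 1) := by
    intro n
    induction n with
    | zero =>
      show r₀ ⊓ 1 ≤ 1 / ((0:ℕ) + 1)
      simpa using min_le_right r₀ 1
    | succ m _ =>
      rw [hδsS]
      have h1 : min (min (δs m) (ρ (δs m) x₀)) (1 / (m + 2)) ≤ 1 / (m + 2) :=
        min_le_right _ _
      have h2 : (0:ℝ) < 1 / (m + 2) := by positivity
      have : ((m : ℝ) + 1) + 1 = (m : ℝ) + 2 := by ring
      rw [Nat.cast_succ, this]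
      linarith
  -- the points of the fan
  have hinf : ∀ n, (D (δs n)).Infinite := fun n => (hD _ (hpos n) (hle_r₀ n)).1
  set y : ℕ → ℕ → X := fun n k => (Set.Infinite.natEmbedding _ (hinf n) k : X) with hy
  have hymem : ∀ n k, y n k ∈ D (δs n) := fun n k =>
    (Set.Infinite.natEmbedding _ (hinf n) k).2
  have hyinj : ∀ n, Function.Injective (y n) := by
    intro n a b hab
    exact (Set.Infinite.natEmbedding _ (hinf n)).injective (Subtype.ext hab)
  have hyx₀ : ∀ n k, y n k ≠ x₀ := fun n k hh =>
    (hD _ (hpos n) (hle_r₀ n)).2.2.1 (hh ▸ hymem n k)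
  have hyball : ∀ n k, dist (y n k) x₀ ≤ δs n := fun n k =>
    Metric.mem_closedBall.1 ((hD _ (hpos n) (hle_r₀ n)).2.1 (hymem n k))
  -- points close enough to the apex avoid the early levels
  have havoid : ∀ m : ℕ, ∀ w : X, dist w x₀ < ρ (δs m) x₀ → w ∈ D (δs m) → w = x₀ := by
    intro m w h1 h2
    have := hρ (δs m) x₀ (hpos m) (hle_r₀ m) ⟨Metric.mem_ball.2 h1, h2⟩
    simpa using this
  have hcross : ∀ m n k, m < n → y n k ∉ D (δs m) := by
    intro m n k hmn hmem
    have h1 : dist (y n k) x₀ < ρ (δs m) x₀ := by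
      have h2 := hyball n k
      have h3 : δs n ≤ δs (m + 1) := hanti hmn
      have h4 := hρle m
      have h5 := hpos (m + 1)
      linarith
    exact hyx₀ n k (havoid m _ h1 hmem)
  -- the embedding
  set e : Fan → X := fun p => Option.elim p x₀ (fun q => y q.1 q.2) with he
  have heinj : Function.Injective e := by
    intro p q hpq
    cases p with
    | none =>
      cases q with
      | none => rfl
      | some b => exact absurd hpq.symm (hyx₀ b.1 b.2)
    | some a =>
      cases q with
      | none => exact absurd hpq (hyx₀ a.1 a.2)
      | some b =>
        obtain ⟨n, k⟩ := a
        obtain ⟨m, j⟩ := b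
        have hpq' : y n k = y m j := hpq
        rcases lt_trichotomy n m with hlt | heq | hgt
        · exact absurd (hpq' ▸ hymem n k) (hcross n m j hlt)
        · subst heq
          rw [hyinj n hpq']
        · exact absurd (hpq'.symm ▸ hymem m j) (hcross m n k hgt)
  -- uniform "discreteness" around any point other than the apex
  have hfin_union : ∀ (N : ℕ) (z : X), ∃ ε > 0,
      ∀ m < N, ∀ w, w ∈ Metric.ball z ε ∩ D (δs m) → w = z := by
    intro N z
    induction N with
    | zero => exact ⟨1, one_pos, fun m hm => absurd hm (Nat.not_lt_zero m)⟩
    | succ M ih =>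
      obtain ⟨ε1, hε1, h1⟩ := ih
      refine ⟨min ε1 (ρ (δs M) z), lt_min hε1 (hρ0 _ _), ?_⟩
      intro m hm w hw
      rcases Nat.lt_succ_iff_lt_or_eq.1 hm with hm' | rfl
      · exact h1 m hm' w ⟨Metric.ball_subset_ball (min_le_left _ _) hw.1, hw.2⟩
      · have := hρ (δs m) z (hpos m) (hle_r₀ m)
          ⟨Metric.ball_subset_ball (min_le_right _ _) hw.1, hw.2⟩
        simpa using this
  have hderiv : ∀ z : X, z ≠ x₀ → ∃ ε > 0, ∀ p : Fan,
      e p ∈ Metric.ball z ε → e p = z := by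
    intro z hz
    have hdz : 0 < dist z x₀ := dist_pos.2 hz
    obtain ⟨N, hN⟩ := exists_nat_one_div_lt (half_pos hdz)
    obtain ⟨ε1, hε1, h1⟩ := hfin_union N z
    refine ⟨min ε1 (dist z x₀ / 2), lt_min hε1 (half_pos hdz), ?_⟩
    intro p hp
    cases p with
    | none =>
      exfalso
      have h2 : dist x₀ z < dist z x₀ / 2 :=
        lt_of_lt_of_le (Metric.mem_ball.1 hp) (min_le_right _ _)
      rw [dist_comm] at h2
      linarith
    | some a =>
      obtain ⟨n, k⟩ := a
      by_cases hn : n < N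
      · exact h1 n hn _ ⟨Metric.ball_subset_ball (min_le_left _ _) hp, hymem n k⟩
      · exfalso
        push_neg at hn
        have h2 : dist (y n k) x₀ ≤ δs N := le_trans (hyball n k) (hanti hn)
        have h3 : δs N ≤ 1 / (N + 1) := hbound N
        have h4 : dist (y n k) z < dist z x₀ / 2 :=
          lt_of_lt_of_le (Metric.mem_ball.1 hp) (min_le_right _ _)
        have h5 : dist z x₀ ≤ dist z (y n k) + dist (y n k) x₀ := dist_triangle _ _ _
        rw [dist_comm z (y n k)] at h5
        linarith
  -- the range is closed
  have hSclosed : IsClosed (Set.range e) := by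
    rw [← isOpen_compl_iff, Metric.isOpen_iff]
    intro z hz
    have hzx : z ≠ x₀ := fun hh => hz ⟨none, hh.symm⟩
    obtain ⟨ε, hε, hd⟩ := hderiv z hzx
    refine ⟨ε, hε, fun w hw => ?_⟩
    rintro ⟨p, rfl⟩
    exact hz ⟨p, hd p hw⟩
  -- continuity
  have hconts : ∀ U : Set X, IsOpen U → IsOpen (e ⁻¹' U) := by
    intro U hU
    show none ∈ e ⁻¹' U → ∃ N : ℕ, ∀ n ≥ N, ∀ k : ℕ, some (n, k) ∈ e ⁻¹' U
    intro hnone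
    have hx₀U : x₀ ∈ U := hnone
    obtain ⟨r, hr, hrsub⟩ := Metric.isOpen_iff.1 hU x₀ hx₀U
    obtain ⟨N, hN⟩ := exists_nat_one_div_lt hr
    refine ⟨N, fun n hn k => ?_⟩
    apply hrsub
    rw [Metric.mem_ball]
    show dist (y n k) x₀ < r
    have h1 : dist (y n k) x₀ ≤ δs n := hyball n k
    have h2 : δs n ≤ δs N := hanti hn
    have h3 : δs N ≤ 1 / (N + 1) := hbound N
    linarith
  -- open sets of the fan are induced
  have hopen : ∀ V : Set Fan, IsOpen V → ∃ U : Set X, IsOpen U ∧ e ⁻¹' U = V := by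
    intro V hV
    have hV' : none ∈ V → ∃ N : ℕ, ∀ n ≥ N, ∀ k : ℕ, some (n, k) ∈ V := hV
    have hiso : ∀ n k : ℕ, ∃ ε > 0, ∀ p : Fan,
        e p ∈ Metric.ball (y n k) ε → e p = y n k :=
      fun n k => hderiv (y n k) (hyx₀ n k)
    choose ε hε0 hεiso using hiso
    set W1 : Set X :=
      ⋃ (n : ℕ) (k : ℕ) (_ : (some (n, k) : Fan) ∈ V), Metric.ball (y n k) (ε n k) with hW1
    have hW1open : IsOpen W1 :=
      isOpen_iUnion fun n => isOpen_iUnion fun k => isOpen_iUnion fun _ => Metric.isOpen_ball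
    have hW1pre : ∀ p : Fan, e p ∈ W1 → p ∈ V := by
      intro p hp
      simp only [hW1, Set.mem_iUnion] at hp
      obtain ⟨n, k, hnk, hball⟩ := hp
      have h1 : e p = y n k := hεiso n k p hball
      have h2 : e p = e (some (n, k)) := h1
      have h3 : p = some (n, k) := heinj h2
      exact h3 ▸ hnk
    have hW1mem : ∀ n k : ℕ, (some (n, k) : Fan) ∈ V → y n k ∈ W1 := by
      intro n k hnk
      simp only [hW1, Set.mem_iUnion]
      exact ⟨n, k, hnk, Metric.mem_ball_self (hε0 n k)⟩
    by_cases hnone : none ∈ V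
    · obtain ⟨N, hN⟩ := hV' hnone
      refine ⟨Metric.ball x₀ (2 * δs N) ∪ W1, Metric.isOpen_ball.union hW1open, ?_⟩
      ext p
      simp only [Set.mem_preimage, Set.mem_union]
      constructor
      · rintro (hp | hp)
        · cases p with
          | none => exact hnone
          | some a =>
            obtain ⟨n, k⟩ := a
            by_cases hn : n < N
            · exfalso
              have h2 : 2 * δs N ≤ ρ (δs n) x₀ := by
                have h3 : δs N ≤ δs (n + 1) := hanti hn
                have h4 := hρle n
                linarith
              have h5 : dist (y n k) x₀ < ρ (δs n) x₀ :=
                lt_of_lt_of_le (Metric.mem_ball.1 hp) h2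
              exact hyx₀ n k (havoid n _ h5 (hymem n k))
            · exact hN n (le_of_not_gt hn) k
        · exact hW1pre p hp
      · intro hpV
        cases p with
        | none =>
          left
          exact Metric.mem_ball_self (by have := hpos N; linarith)
        | some a =>
          obtain ⟨n, k⟩ := a
          right
          exact hW1mem n k hpV
    · refine ⟨W1, hW1open, ?_⟩
      ext p
      simp only [Set.mem_preimage]
      constructor
      · exact hW1pre p
      · intro hpV
        cases p with
        | none => exact absurd hpV hnone
        | some a =>
          obtain ⟨n, k⟩ := a
          exact hW1mem n k hpV
  refine ⟨e, ⟨⟨⟨?_⟩, heinj⟩, hSclosed⟩⟩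
  apply TopologicalSpace.ext_iff.2
  intro s
  rw [isOpen_induced_iff]
  constructor
  · exact hopen s
  · rintro ⟨U, hU, rfl⟩
    exact hconts U hU
end

section
/- Ostrand's covering theorem: a metric space Y has covering dimension ≤ n if and only if for every open cover 𝒞 of Y and every integer k ≥ n+1 there exist k discrete families of open sets 𝒰_1, …, 𝒰_k such that the union of any n+1 of the 𝒰_i is a cover of Y refining 𝒞. -/
/-- A family of sets is discrete if every point has a neighborhood meeting at
most one member of the family. -/
def IsDiscreteFamily {Y : Type*} [TopologicalSpace Y] (𝒰 : Set (Set Y)) : Prop :=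
  ∀ y : Y, ∃ V ∈ nhds y, {U ∈ 𝒰 | (U ∩ V).Nonempty}.Subsingleton

open Metric Set

namespace Ostrand13Aux


variable {Y : Type*} [MetricSpace Y] {ι : Type*}

/-- truncated distance to the complement of `w b` -/
noncomputable def ff (w : ι → Set Y) (b : ι) (x : Y) : ℝ := min 1 (infDist x (w b)ᶜ)

lemma ff_nonneg (w : ι → Set Y) (b : ι) (x : Y) : 0 ≤ ff w b x :=
  le_min zero_le_one infDist_nonneg

lemma ff_le_one (w : ι → Set Y) (b : ι) (x : Y) : ff w b x ≤ 1 := min_le_left _ _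

lemma ff_lip (w : ι → Set Y) (b : ι) (x y : Y) : ff w b x ≤ ff w b y + dist x y := by
  rcases le_total 1 (infDist y (w b)ᶜ) with h | h
  · have : ff w b y = 1 := min_eq_left h
    rw [this]
    exact le_add_of_le_of_nonneg (ff_le_one w b x) dist_nonneg
  · have hy : ff w b y = infDist y (w b)ᶜ := min_eq_right h
    rw [hy]
    calc ff w b x ≤ infDist x (w b)ᶜ := min_le_right _ _
      _ ≤ infDist y (w b)ᶜ + dist x y := infDist_le_infDist_add_dist

lemma ff_eq_zero (w : ι → Set Y) (b : ι) (x : Y) (hx : x ∉ w b) : ff w b x = 0 := by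
  have : infDist x (w b)ᶜ = 0 := infDist_zero_of_mem hx
  simp [ff, this]

lemma ff_mem_of_pos {w : ι → Set Y} {b : ι} {x : Y} (h : 0 < ff w b x) : x ∈ w b := by
  by_contra hx
  rw [ff_eq_zero w b x hx] at h
  exact lt_irrefl _ h

lemma ff_pos {w : ι → Set Y} {b : ι} (hopen : IsOpen (w b)) (hproper : ((w b)ᶜ).Nonempty)
    {x : Y} (hx : x ∈ w b) : 0 < ff w b x := by
  have hcl : IsClosed ((w b)ᶜ) := hopen.isClosed_compl
  have : x ∉ (w b)ᶜ := fun h => h hx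
  have hpos : 0 < infDist x (w b)ᶜ := (hcl.notMem_iff_infDist_pos hproper).1 this
  exact lt_min one_pos hpos

/-- min over `S` of the `ff`'s (with 1 inserted for nonemptiness) -/
noncomputable def pp (w : ι → Set Y) (S : Finset ι) (x : Y) : ℝ :=
  sInf (insert 1 ((fun b => ff w b x) '' (S : Set ι)))

/-- sup over the complement of `S` of the `ff`'s (with 0 inserted) -/
noncomputable def qq (w : ι → Set Y) (S : Finset ι) (x : Y) : ℝ :=
  sSup (insert 0 ((fun b => ff w b x) '' {b | b ∉ S}))

lemma pp_bddBelow (w : ι → Set Y) (S : Finset ι) (x : Y) :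
    BddBelow (insert 1 ((fun b => ff w b x) '' (S : Set ι))) := by
  refine ⟨0, fun t ht => ?_⟩
  rcases ht with rfl | ⟨b, _, rfl⟩
  · exact zero_le_one
  · exact ff_nonneg w b x

lemma qq_bddAbove (w : ι → Set Y) (S : Finset ι) (x : Y) :
    BddAbove (insert 0 ((fun b => ff w b x) '' {b | b ∉ S})) := by
  refine ⟨1, fun t ht => ?_⟩
  rcases ht with rfl | ⟨b, _, rfl⟩
  · exact zero_le_one
  · exact ff_le_one w b x

lemma pp_nonneg (w : ι → Set Y) (S : Finset ι) (x : Y) : 0 ≤ pp w S x := by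
  refine le_csInf ⟨1, mem_insert _ _⟩ fun t ht => ?_
  rcases ht with rfl | ⟨b, _, rfl⟩
  · exact zero_le_one
  · exact ff_nonneg w b x

lemma pp_le_one (w : ι → Set Y) (S : Finset ι) (x : Y) : pp w S x ≤ 1 :=
  csInf_le (pp_bddBelow w S x) (mem_insert _ _)

lemma pp_le_ff (w : ι → Set Y) {S : Finset ι} {b : ι} (hb : b ∈ S) (x : Y) :
    pp w S x ≤ ff w b x :=
  csInf_le (pp_bddBelow w S x) (Or.inr ⟨b, by simpa using hb, rfl⟩)

lemma qq_nonneg (w : ι → Set Y) (S : Finset ι) (x : Y) : 0 ≤ qq w S x :=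
  le_csSup (qq_bddAbove w S x) (mem_insert _ _)

lemma ff_le_qq (w : ι → Set Y) {S : Finset ι} {b : ι} (hb : b ∉ S) (x : Y) :
    ff w b x ≤ qq w S x :=
  le_csSup (qq_bddAbove w S x) (Or.inr ⟨b, hb, rfl⟩)

lemma pp_lip (w : ι → Set Y) (S : Finset ι) (x y : Y) : pp w S x ≤ pp w S y + dist x y := by
  have h : pp w S x - dist x y ≤ pp w S y := by
    refine le_csInf ⟨1, mem_insert _ _⟩ fun t ht => ?_
    rcases ht with rfl | ⟨b, hb, rfl⟩
    · have := pp_le_one w S x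
      linarith [dist_nonneg (x := x) (y := y)]
    · have h1 : pp w S x ≤ ff w b x := csInf_le (pp_bddBelow w S x) (Or.inr ⟨b, hb, rfl⟩)
      have h2 : ff w b x ≤ ff w b y + dist x y := ff_lip w b x y
      linarith
  linarith

lemma qq_lip (w : ι → Set Y) (S : Finset ι) (x y : Y) : qq w S x ≤ qq w S y + dist x y := by
  refine csSup_le ⟨0, mem_insert _ _⟩ fun t ht => ?_
  rcases ht with rfl | ⟨b, hb, rfl⟩
  · have := qq_nonneg w S y
    linarith [dist_nonneg (x := x) (y := y)]
  · have h2 : ff w b x ≤ ff w b y + dist x y := ff_lip w b x y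
    have h3 : ff w b y ≤ qq w S y := ff_le_qq w hb y
    linarith

lemma pp_pos {w : ι → Set Y} {S : Finset ι} {x : Y}
    (h : ∀ b ∈ S, 0 < ff w b x) : 0 < pp w S x := by
  have hfin : (insert 1 ((fun b => ff w b x) '' (S : Set ι))).Finite :=
    (((S : Set ι).toFinite.image _)).insert 1
  have hne : (insert 1 ((fun b => ff w b x) '' (S : Set ι))).Nonempty := ⟨1, mem_insert _ _⟩
  have hmem := hne.csInf_mem hfin
  rcases hmem with hm | ⟨b, hb, hm⟩
  · rw [pp]; rw [hm]; exact one_pos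
  · rw [pp, ← hm]; exact h b (by simpa using hb)

lemma qq_eq_zero {w : ι → Set Y} {S : Finset ι} {x : Y}
    (h : ∀ b, b ∉ S → ff w b x = 0) : qq w S x = 0 := by
  refine le_antisymm ?_ (qq_nonneg w S x)
  refine csSup_le ⟨0, mem_insert _ _⟩ fun t ht => ?_
  rcases ht with rfl | ⟨b, hb, rfl⟩
  · exact le_refl 0
  · exact le_of_eq (h b hb)

/-- the "gap" function -/
noncomputable def gg (w : ι → Set Y) (S : Finset ι) (x : Y) : ℝ :=
  max 0 (pp w S x - qq w S x)

lemma gg_nonneg (w : ι → Set Y) (S : Finset ι) (x : Y) : 0 ≤ gg w S x := le_max_left _ _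

lemma gg_le_one (w : ι → Set Y) (S : Finset ι) (x : Y) : gg w S x ≤ 1 := by
  have h1 := pp_le_one w S x
  have h2 := qq_nonneg w S x
  exact max_le zero_le_one (by linarith)

lemma gg_pos_iff (w : ι → Set Y) (S : Finset ι) (x : Y) :
    0 < gg w S x ↔ qq w S x < pp w S x := by
  unfold gg
  rw [lt_max_iff]
  constructor
  · rintro (h | h)
    · exact absurd h (lt_irrefl 0)
    · linarith
  · intro h; right; linarith

lemma gg_lip (w : ι → Set Y) (S : Finset ι) (x y : Y) :
    gg w S x ≤ gg w S y + 2 * dist x y := by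
  have h1 := pp_lip w S x y
  have h2 := qq_lip w S y x
  have h3 : pp w S x - qq w S x ≤ (pp w S y - qq w S y) + 2 * dist x y := by
    have hd : dist y x = dist x y := dist_comm y x
    rw [hd] at h2
    linarith
  have h4 : gg w S y ≤ gg w S y + 2 * dist x y := by
    have := dist_nonneg (x := x) (y := y); linarith
  refine max_le ?_ ?_
  · calc (0:ℝ) ≤ gg w S y := gg_nonneg w S y
      _ ≤ _ := h4
  · calc pp w S x - qq w S x ≤ (pp w S y - qq w S y) + 2 * dist x y := h3
      _ ≤ gg w S y + 2 * dist x y := by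
          have : pp w S y - qq w S y ≤ gg w S y := le_max_right _ _
          linarith

/-- the sector associated to a finite index set -/
def SecSet (w : ι → Set Y) (S : Finset ι) : Set Y := {x | qq w S x < pp w S x}

lemma continuous_pp (w : ι → Set Y) (S : Finset ι) : Continuous (pp w S) := by
  have : LipschitzWith 1 (pp w S) := by
    refine LipschitzWith.of_dist_le_mul fun x y => ?_
    rw [Real.dist_eq, abs_sub_le_iff]
    constructor
    · have := pp_lip w S x y; simp only [NNReal.coe_one, one_mul]; linarith
    · have := pp_lip w S y x; have hd : dist y x = dist x y := dist_comm y x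
      rw [hd] at this; simp only [NNReal.coe_one, one_mul]; linarith
  exact this.continuous

lemma continuous_qq (w : ι → Set Y) (S : Finset ι) : Continuous (qq w S) := by
  have : LipschitzWith 1 (qq w S) := by
    refine LipschitzWith.of_dist_le_mul fun x y => ?_
    rw [Real.dist_eq, abs_sub_le_iff]
    constructor
    · have := qq_lip w S x y; simp only [NNReal.coe_one, one_mul]; linarith
    · have := qq_lip w S y x; have hd : dist y x = dist x y := dist_comm y x
      rw [hd] at this; simp only [NNReal.coe_one, one_mul]; linarith
  exact this.continuous

lemma isOpen_SecSet (w : ι → Set Y) (S : Finset ι) : IsOpen (SecSet w S) :=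
  isOpen_lt (continuous_qq w S) (continuous_pp w S)

lemma mem_of_mem_SecSet {w : ι → Set Y} {S : Finset ι} {x : Y}
    (hx : x ∈ SecSet w S) {b : ι} (hb : b ∈ S) : x ∈ w b := by
  have h1 : qq w S x < pp w S x := hx
  have h2 : pp w S x ≤ ff w b x := pp_le_ff w hb x
  have h3 : 0 ≤ qq w S x := qq_nonneg w S x
  exact ff_mem_of_pos (by linarith)

lemma SecSet_disjoint {w : ι → Set Y} {S S' : Finset ι} (hcard : S.card = S'.card)
    (hne : S ≠ S') {x : Y} (hx : x ∈ SecSet w S) (hx' : x ∈ SecSet w S') : False := by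
  -- there are elements in S \ S' and S' \ S
  have h1 : ∃ b, b ∈ S ∧ b ∉ S' := by
    by_contra h
    push_neg at h
    have hsub : S ⊆ S' := fun b hb => h b hb
    exact hne (Finset.eq_of_subset_of_card_le hsub (le_of_eq hcard.symm))
  have h2 : ∃ b, b ∈ S' ∧ b ∉ S := by
    by_contra h
    push_neg at h
    have hsub : S' ⊆ S := fun b hb => h b hb
    exact hne (Finset.eq_of_subset_of_card_le hsub (le_of_eq hcard)).symm
  obtain ⟨b, hbS, hbS'⟩ := h1
  obtain ⟨b', hb'S', hb'S⟩ := h2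
  have e1 : ff w b' x < ff w b x := by
    have := pp_le_ff w hbS x
    have := ff_le_qq w hb'S x
    have h1 : qq w S x < pp w S x := hx
    linarith
  have e2 : ff w b x < ff w b' x := by
    have := pp_le_ff w hb'S' x
    have := ff_le_qq w hbS' x
    have h2 : qq w S' x < pp w S' x := hx'
    linarith
  linarith



/-- the `c`-th "gap size" function -/
noncomputable def hh (w : ι → Set Y) (c : ℕ) (x : Y) : ℝ :=
  sSup (insert 0 ((fun S => gg w S x) '' {S : Finset ι | S.card = c + 1}))

lemma hh_bddAbove (w : ι → Set Y) (c : ℕ) (x : Y) :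
    BddAbove (insert 0 ((fun S => gg w S x) '' {S : Finset ι | S.card = c + 1})) := by
  refine ⟨1, fun t ht => ?_⟩
  rcases ht with rfl | ⟨S, _, rfl⟩
  · exact zero_le_one
  · exact gg_le_one w S x

lemma hh_nonneg (w : ι → Set Y) (c : ℕ) (x : Y) : 0 ≤ hh w c x :=
  le_csSup (hh_bddAbove w c x) (mem_insert _ _)

lemma gg_le_hh (w : ι → Set Y) {S : Finset ι} {c : ℕ} (hS : S.card = c + 1) (x : Y) :
    gg w S x ≤ hh w c x :=
  le_csSup (hh_bddAbove w c x) (Or.inr ⟨S, hS, rfl⟩)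

lemma hh_lip (w : ι → Set Y) (c : ℕ) (x y : Y) : hh w c x ≤ hh w c y + 2 * dist x y := by
  refine csSup_le ⟨0, mem_insert _ _⟩ fun t ht => ?_
  rcases ht with rfl | ⟨S, hS, rfl⟩
  · have := hh_nonneg w c y
    have := dist_nonneg (x := x) (y := y)
    linarith
  · have h1 : gg w S x ≤ gg w S y + 2 * dist x y := gg_lip w S x y
    have h2 : gg w S y ≤ hh w c y := gg_le_hh w hS y
    linarith

lemma continuous_hh (w : ι → Set Y) (c : ℕ) : Continuous (hh w c) := by
  have : LipschitzWith 2 (hh w c) := by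
    refine LipschitzWith.of_dist_le_mul fun x y => ?_
    rw [Real.dist_eq, abs_sub_le_iff]
    have h2 : ((2 : NNReal) : ℝ) = 2 := by norm_num
    constructor
    · have := hh_lip w c x y; rw [h2]; linarith
    · have := hh_lip w c y x; have hd : dist y x = dist x y := dist_comm y x
      rw [hd] at this; rw [h2]; linarith
  exact this.continuous

lemma hh_pos_exists {w : ι → Set Y} {c : ℕ} {x : Y} (h : 0 < hh w c x) :
    ∃ S : Finset ι, S.card = c + 1 ∧ x ∈ SecSet w S := by
  obtain ⟨a, ha, hlt⟩ := exists_lt_of_lt_csSup ⟨0, mem_insert _ _⟩ h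
  rcases ha with rfl | ⟨S, hS, rfl⟩
  · exact absurd hlt (lt_irrefl 0)
  · exact ⟨S, hS, (gg_pos_iff w S x).1 hlt⟩

/-- the normalizing factor -/
noncomputable def mu (w : ι → Set Y) (n : ℕ) (x : Y) : ℝ := ∑ c : Fin (n + 1), hh w c x

/-- the barycentric-type coordinates -/
noncomputable def th (w : ι → Set Y) (n : ℕ) (c : Fin (n + 1)) (x : Y) : ℝ :=
  hh w c x / mu w n x

section WithHyp

variable {w : ι → Set Y} {n : ℕ}
variable (hopen : ∀ b, IsOpen (w b)) (hproper : ∀ b, ((w b)ᶜ).Nonempty)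
variable (hcover : ∀ x : Y, ∃ b, x ∈ w b)
variable (horder : ∀ x : Y, {b | x ∈ w b}.Finite ∧ {b | x ∈ w b}.ncard ≤ n + 1)

include hopen hproper hcover horder in
lemma mu_pos (x : Y) : 0 < mu w n x := by
  obtain ⟨hfin, hcard⟩ := horder x
  have hne : {b | x ∈ w b}.Nonempty := hcover x
  set A : Finset ι := hfin.toFinset with hA
  have hAmem : ∀ b, b ∈ A ↔ x ∈ w b := by
    intro b; simp [hA, Set.Finite.mem_toFinset]
  have hAne : A.Nonempty := by
    obtain ⟨b, hb⟩ := hne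
    exact ⟨b, (hAmem b).2 hb⟩
  have hAcard : A.card ≤ n + 1 := by
    have : {b | x ∈ w b}.ncard = A.card := by
      rw [hA, Set.ncard_eq_toFinset_card _ hfin]
    omega
  have hcardpos : 1 ≤ A.card := Finset.card_pos.2 hAne
  -- the color
  set c : ℕ := A.card - 1 with hc
  have hcc : c + 1 = A.card := by omega
  have hcn : c < n + 1 := by omega
  have hgg : 0 < gg w A x := by
    rw [gg_pos_iff]
    have hq : qq w A x = 0 := by
      refine qq_eq_zero fun b hb => ?_
      refine ff_eq_zero w b x ?_
      intro hx
      exact hb ((hAmem b).2 hx)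
    have hp : 0 < pp w A x := by
      refine pp_pos fun b hb => ?_
      exact ff_pos (hopen b) (hproper b) ((hAmem b).1 hb)
    rw [hq]; exact hp
  have hhh : 0 < hh w c x := lt_of_lt_of_le hgg (gg_le_hh w hcc.symm x)
  have : hh w (⟨c, hcn⟩ : Fin (n + 1)) x ≤ mu w n x := by
    refine Finset.single_le_sum (f := fun j : Fin (n + 1) => hh w j x) ?_ (Finset.mem_univ _)
    intro j _
    exact hh_nonneg w j x
  simp only at this
  exact lt_of_lt_of_le hhh this

include hopen hproper hcover horder in
lemma th_sum (x : Y) : ∑ c : Fin (n + 1), th w n c x = 1 := by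
  have hmu : 0 < mu w n x := mu_pos hopen hproper hcover horder x
  rw [show (∑ c : Fin (n + 1), th w n c x) = (∑ c : Fin (n + 1), hh w c x) / mu w n x from
    (Finset.sum_div _ _ _).symm]
  rw [show (∑ c : Fin (n + 1), hh w ↑c x) = mu w n x from rfl]
  field_simp

include hopen hproper hcover horder in
lemma continuous_th (c : Fin (n + 1)) : Continuous (th w n c) := by
  refine Continuous.div (continuous_hh w c) ?_ ?_
  · exact continuous_finset_sum _ fun j _ => continuous_hh w j
  · intro x
    exact ne_of_gt (mu_pos hopen hproper hcover horder x)

include hopen hproper hcover horder in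
lemma th_nonneg (c : Fin (n + 1)) (x : Y) : 0 ≤ th w n c x :=
  div_nonneg (hh_nonneg w c x) (le_of_lt (mu_pos hopen hproper hcover horder x))

include hopen hproper hcover horder in
lemma th_pos_sector {c : Fin (n + 1)} {x : Y} (h : 0 < th w n c x) :
    ∃ S : Finset ι, S.card = (c : ℕ) + 1 ∧ x ∈ SecSet w S := by
  have hmu : 0 < mu w n x := mu_pos hopen hproper hcover horder x
  have : 0 < hh w c x := by
    by_contra hle
    push_neg at hle
    have h0 : hh w c x = 0 := le_antisymm hle (hh_nonneg w c x)
    rw [th, h0, zero_div] at h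
    exact lt_irrefl _ h
  exact hh_pos_exists this

include hopen hproper hcover horder in
lemma th_max (x : Y) : ∃ c : Fin (n + 1), 1 / ((n : ℝ) + 1) ≤ th w n c x := by
  by_contra h
  push_neg at h
  have hsum : ∑ c : Fin (n + 1), th w n c x < ∑ _c : Fin (n + 1), 1 / ((n : ℝ) + 1) := by
    refine Finset.sum_lt_sum_of_nonempty ?_ fun c _ => h c
    exact Finset.univ_nonempty
  rw [th_sum hopen hproper hcover horder x] at hsum
  rw [Finset.sum_const, Finset.card_univ, Fintype.card_fin] at hsum
  have : ((n : ℝ) + 1) ≠ 0 := by positivity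
  rw [nsmul_eq_mul] at hsum
  have : ((n : ℝ) + 1) * (1 / ((n : ℝ) + 1)) = 1 := by field_simp
  rw [show (((n : ℕ) + 1 : ℕ) : ℝ) = (n : ℝ) + 1 by push_cast; ring] at hsum
  rw [this] at hsum
  exact lt_irrefl _ hsum

end WithHyp




section Arith

variable (n k : ℕ)

/-- the mesh of the grids -/
noncomputable def dd : ℝ := ((n : ℝ) + 2 + 1 / (2 * (k : ℝ)))⁻¹

/-- the half-width of the "nets" -/
noncomputable def wd : ℝ := dd n k / (100 * ((n : ℝ) + 2) * (k : ℝ))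

/-- the depth threshold -/
noncomputable def kap : ℝ := 1 / ((n : ℝ) + 1) - dd n k

/-- grid points of the `i`-th staggered grid -/
noncomputable def lo (i : Fin k) (m : ℤ) : ℝ := dd n k * ((m : ℝ) + (i : ℝ) / (k : ℝ))

variable {n k}

lemma dd_pos : 0 < dd n k := by
  rw [dd]
  have h1 : (0:ℝ) ≤ 1 / (2 * (k : ℝ)) := by positivity
  have : (0 : ℝ) < (n : ℝ) + 2 + 1 / (2 * (k : ℝ)) := by positivity
  positivity

lemma lo_succ (i : Fin k) (m : ℤ) : lo n k i (m + 1) = lo n k i m + dd n k := by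
  rw [lo, lo]; push_cast; ring

lemma lo_mono (i : Fin k) {m m' : ℤ} (h : m ≤ m') : lo n k i m ≤ lo n k i m' := by
  rw [lo, lo]
  have hd := dd_pos (n := n) (k := k)
  have : (m : ℝ) ≤ (m' : ℝ) := by exact_mod_cast h
  nlinarith

variable (hk : n + 1 ≤ k)
include hk

lemma kposR : (0 : ℝ) < (k : ℝ) := by
  have : 0 < k := by omega
  exact_mod_cast this

lemma dd_lt : dd n k < 1 / ((n : ℝ) + 2) := by
  have h := kposR hk
  rw [dd, show (1 : ℝ) / ((n : ℝ) + 2) = ((n : ℝ) + 2)⁻¹ by rw [one_div]]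
  refine inv_strictAnti₀ (by positivity) ?_
  have : 0 < 1 / (2 * (k : ℝ)) := by positivity
  linarith

lemma kap_pos : 0 < kap n k := by
  have h1 := dd_lt hk
  have h2 : (1 : ℝ) / ((n : ℝ) + 2) < 1 / ((n : ℝ) + 1) := by
    apply div_lt_div_of_pos_left one_pos (by positivity)
    linarith
  rw [kap]
  linarith

lemma wd_pos : 0 < wd n k := by
  have hd := dd_pos (n := n) (k := k)
  have h := kposR hk
  rw [wd]
  positivity

lemma two_wd_lt : 2 * wd n k < dd n k / (k : ℝ) := by
  have hd := dd_pos (n := n) (k := k)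
  have h := kposR hk
  have h100 : (0:ℝ) < 100 * ((n : ℝ) + 2) * (k : ℝ) := by positivity
  rw [wd, show (2:ℝ) * (dd n k / (100 * ((n : ℝ) + 2) * (k : ℝ)))
      = (2 * dd n k) / (100 * ((n : ℝ) + 2) * (k : ℝ)) by ring]
  rw [div_lt_div_iff₀ h100 h]
  have hn0 : (0:ℝ) ≤ (n : ℝ) := by positivity
  nlinarith [mul_pos hd h]

lemma two_wd_lt_dd : 2 * wd n k < dd n k := by
  have h1 := two_wd_lt hk
  have h := kposR hk
  have hd := dd_pos (n := n) (k := k)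
  have hk1 : (1:ℝ) ≤ (k : ℝ) := by
    have : 1 ≤ k := by omega
    exact_mod_cast this
  have h2 : dd n k / (k : ℝ) ≤ dd n k := by
    rw [div_le_iff₀ h]
    nlinarith
  linarith

lemma obstr : ((n : ℝ) + 1) * wd n k < dd n k / (2 * (k : ℝ)) := by
  have hd := dd_pos (n := n) (k := k)
  have h := kposR hk
  have h100 : (0:ℝ) < 100 * ((n : ℝ) + 2) * (k : ℝ) := by positivity
  rw [wd, show ((n : ℝ) + 1) * (dd n k / (100 * ((n : ℝ) + 2) * (k : ℝ)))
      = (((n : ℝ) + 1) * dd n k) / (100 * ((n : ℝ) + 2) * (k : ℝ)) by ring]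
  rw [div_lt_div_iff₀ h100 (by positivity)]
  have hn0 : (0:ℝ) ≤ (n : ℝ) := by positivity
  nlinarith [mul_pos hd h, mul_pos (mul_pos hd h) h]

omit hk in
lemma inv_dd : (dd n k)⁻¹ = (n : ℝ) + 2 + 1 / (2 * (k : ℝ)) := by
  rw [dd, inv_inv]

/-- every real number is either aligned to the `i`-th grid or lies well inside a gap -/
lemma gaps (t : ℝ) (i : Fin k) :
    (∃ m : ℤ, |t - lo n k i m| ≤ wd n k) ∨
    (∃ m : ℤ, lo n k i m + wd n k < t ∧ t < lo n k i m + dd n k - wd n k) := by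
  have hd := dd_pos (n := n) (k := k)
  have hw := wd_pos hk
  set m : ℤ := ⌊t / dd n k - (i : ℝ) / (k : ℝ)⌋ with hm
  have h1 : (m : ℝ) ≤ t / dd n k - (i : ℝ) / (k : ℝ) := Int.floor_le _
  have h2 : t / dd n k - (i : ℝ) / (k : ℝ) < (m : ℝ) + 1 := Int.lt_floor_add_one _
  have heq : dd n k * (t / dd n k) = t := by field_simp
  have hlo : lo n k i m ≤ t := by
    rw [lo]
    have h1' : (m : ℝ) + (i : ℝ) / (k : ℝ) ≤ t / dd n k := by linarith
    calc dd n k * ((m : ℝ) + (i : ℝ) / (k : ℝ)) ≤ dd n k * (t / dd n k) :=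
          mul_le_mul_of_nonneg_left h1' (le_of_lt hd)
      _ = t := heq
  have hhi : t < lo n k i m + dd n k := by
    have h2' : t / dd n k < (m : ℝ) + 1 + (i : ℝ) / (k : ℝ) := by linarith
    calc t = dd n k * (t / dd n k) := heq.symm
      _ < dd n k * ((m : ℝ) + 1 + (i : ℝ) / (k : ℝ)) := mul_lt_mul_of_pos_left h2' hd
      _ = lo n k i m + dd n k := by rw [lo]; ring
  by_cases hc1 : t ≤ lo n k i m + wd n k
  · left
    exact ⟨m, by rw [abs_le]; constructor <;> linarith⟩
  by_cases hc2 : lo n k i m + dd n k - wd n k ≤ t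
  · left
    refine ⟨m + 1, ?_⟩
    rw [lo_succ, abs_le]
    constructor <;> linarith
  · right
    push_neg at hc1 hc2
    exact ⟨m, hc1, hc2⟩

/-- nets of different grids are disjoint -/
lemma nets_disj {i j : Fin k} (hij : i ≠ j) {t : ℝ} {m m' : ℤ}
    (h1 : |t - lo n k i m| ≤ wd n k) (h2 : |t - lo n k j m'| ≤ wd n k) : False := by
  have hd := dd_pos (n := n) (k := k)
  have hK := kposR hk
  have h3 : |lo n k i m - lo n k j m'| ≤ 2 * wd n k := by
    calc |lo n k i m - lo n k j m'| = |(t - lo n k j m') - (t - lo n k i m)| := by ring_nf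
      _ ≤ |t - lo n k j m'| + |t - lo n k i m| := abs_sub _ _
      _ ≤ 2 * wd n k := by linarith
  obtain ⟨z, hz⟩ : ∃ z : ℤ, z = (k : ℤ) * (m - m') + ((i : ℤ) - (j : ℤ)) := ⟨_, rfl⟩
  have hz0 : z ≠ 0 := by
    intro h0
    have hik : (i : ℤ) < k := by exact_mod_cast i.isLt
    have hjk : (j : ℤ) < k := by exact_mod_cast j.isLt
    have hi0 : (0:ℤ) ≤ (i : ℤ) := by positivity
    have hj0 : (0:ℤ) ≤ (j : ℤ) := by positivity
    have hne : (i : ℤ) - (j : ℤ) ≠ 0 := by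
      intro hh
      apply hij
      have : (i : ℤ) = (j : ℤ) := by omega
      exact Fin.ext (by exact_mod_cast this)
    have hdvd : (k : ℤ) ∣ ((i : ℤ) - (j : ℤ)) := by
      refine ⟨-(m - m'), ?_⟩
      have : (k : ℤ) * (m - m') + ((i : ℤ) - (j : ℤ)) = 0 := by rw [← hz]; exact h0
      linarith [this]
    have habs : |(i : ℤ) - (j : ℤ)| < k := by rw [abs_lt]; omega
    exact hne (Int.eq_zero_of_abs_lt_dvd hdvd habs)
  have hzabs : (1 : ℝ) ≤ |(z : ℝ)| := by
    have h1' : (1 : ℤ) ≤ |z| := by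
      rcases z.natAbs.eq_zero_or_pos with h | h
      · exfalso; exact hz0 (Int.natAbs_eq_zero.1 h)
      · have := Int.natAbs_pos.2 hz0
        rw [Int.abs_eq_natAbs]
        exact_mod_cast this
    calc (1:ℝ) = ((1:ℤ):ℝ) := by norm_num
      _ ≤ ((|z| : ℤ) : ℝ) := by exact_mod_cast h1'
      _ = |(z : ℝ)| := by push_cast; rfl
  have hdiff : lo n k i m - lo n k j m' = dd n k / (k : ℝ) * (z : ℝ) := by
    rw [lo, lo, hz]
    push_cast
    field_simp
    ring
  have h4 : dd n k / (k : ℝ) ≤ |lo n k i m - lo n k j m'| := by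
    rw [hdiff, abs_mul, abs_of_pos (by positivity : (0:ℝ) < dd n k / (k:ℝ))]
    nlinarith [div_pos hd hK]
  have h5 := two_wd_lt hk
  linarith

/-- window of width `2 wd` meets at most one gap -/
lemma gap_window {i : Fin k} {m m' : ℤ} {a t t' : ℝ}
    (ht : lo n k i m + wd n k < t ∧ t < lo n k i m + dd n k - wd n k)
    (hta : |t - a| < wd n k)
    (ht' : lo n k i m' + wd n k < t' ∧ t' < lo n k i m' + dd n k - wd n k)
    (hta' : |t' - a| < wd n k) : m = m' := by
  have hd := dd_pos (n := n) (k := k)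
  have hw := wd_pos hk
  by_contra hne
  rcases lt_or_gt_of_ne hne with hlt | hlt
  · have h1 : lo n k i (m + 1) ≤ lo n k i m' := lo_mono i (by omega)
    rw [lo_succ] at h1
    rw [abs_lt] at hta hta'
    have ha1 : a < lo n k i m + dd n k := by
      obtain ⟨l, r⟩ := ht; obtain ⟨l2, r2⟩ := hta; linarith
    have ha2 : lo n k i m' < a := by
      obtain ⟨l, r⟩ := ht'; obtain ⟨l2, r2⟩ := hta'; linarith
    linarith
  · have h1 : lo n k i (m' + 1) ≤ lo n k i m := lo_mono i (by omega)
    rw [lo_succ] at h1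
    rw [abs_lt] at hta hta'
    have ha1 : a < lo n k i m' + dd n k := by
      obtain ⟨l, r⟩ := ht'; obtain ⟨l2, r2⟩ := hta'; linarith
    have ha2 : lo n k i m < a := by
      obtain ⟨l, r⟩ := ht; obtain ⟨l2, r2⟩ := hta; linarith
    linarith

/-- the sum-to-one obstruction -/
lemma sum_obstr (mm : Fin (n + 1) → ℤ) (ii : Fin (n + 1) → Fin k) (tv : Fin (n + 1) → ℝ)
    (hsum : ∑ c, tv c = 1) (hal : ∀ c, |tv c - lo n k (ii c) (mm c)| ≤ wd n k) : False := by
  have hd := dd_pos (n := n) (k := k)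
  have hdd0 : dd n k ≠ 0 := ne_of_gt hd
  have hK := kposR hk
  set M : ℤ := ∑ c, mm c with hM
  set T : ℤ := ∑ c, ((ii c : ℕ) : ℤ) with hT
  set X : ℝ := (M : ℝ) + (T : ℝ) / (k : ℝ) with hX
  have hsum2 : ∑ c, lo n k (ii c) (mm c) = dd n k * X := by
    calc ∑ c, lo n k (ii c) (mm c)
        = ∑ c, dd n k * (((mm c : ℤ) : ℝ) + ((ii c : ℕ) : ℝ) / (k : ℝ)) := rfl
      _ = dd n k * ∑ c, (((mm c : ℤ) : ℝ) + ((ii c : ℕ) : ℝ) / (k : ℝ)) := by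
          rw [Finset.mul_sum]
      _ = dd n k * X := by
          congr 1
          rw [hX, hM, hT, Finset.sum_add_distrib, ← Finset.sum_div]
          push_cast
          ring
  have herr : |1 - dd n k * X| ≤ ((n : ℝ) + 1) * wd n k := by
    have step : |∑ c, tv c - ∑ c, lo n k (ii c) (mm c)| ≤ ((n : ℝ) + 1) * wd n k := by
      calc |∑ c, tv c - ∑ c, lo n k (ii c) (mm c)|
          = |∑ c, (tv c - lo n k (ii c) (mm c))| := by rw [Finset.sum_sub_distrib]
        _ ≤ ∑ c, |tv c - lo n k (ii c) (mm c)| := Finset.abs_sum_le_sum_abs _ _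
        _ ≤ ∑ _c : Fin (n + 1), wd n k := Finset.sum_le_sum fun c _ => hal c
        _ = ((n : ℝ) + 1) * wd n k := by
            rw [Finset.sum_const, Finset.card_univ, Fintype.card_fin, nsmul_eq_mul]
            push_cast
            ring
    rw [hsum, hsum2] at step
    exact step
  have herr2 : |(dd n k)⁻¹ - X| ≤ ((n : ℝ) + 1) * wd n k / dd n k := by
    have hkey : |1 - dd n k * X| = dd n k * |(dd n k)⁻¹ - X| := by
      rw [show (1 : ℝ) - dd n k * X = dd n k * ((dd n k)⁻¹ - X) by
        rw [mul_sub, mul_inv_cancel₀ hdd0], abs_mul, abs_of_pos hd]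
    rw [hkey] at herr
    rw [le_div_iff₀ hd]
    linarith
  have hsmall : ((n : ℝ) + 1) * wd n k / dd n k < 1 / (2 * (k : ℝ)) := by
    have hob := obstr hk
    have h2k : (0:ℝ) < 2 * (k : ℝ) := by positivity
    rw [div_lt_div_iff₀ hd h2k]
    have := mul_lt_mul_of_pos_right hob h2k
    rw [div_mul_cancel₀ _ (ne_of_gt h2k)] at this
    linarith
  obtain ⟨z, hzdef⟩ : ∃ z : ℤ, z = (k : ℤ) * ((n : ℤ) + 2) - (k : ℤ) * M - T := ⟨_, rfl⟩
  have hval : (dd n k)⁻¹ - X = (2 * (z : ℝ) + 1) / (2 * (k : ℝ)) := by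
    rw [inv_dd, hX, hzdef]
    push_cast
    field_simp
    ring
  have hodd : (1 : ℝ) ≤ |2 * (z : ℝ) + 1| := by
    have h1 : (1 : ℤ) ≤ |2 * z + 1| := by
      have : (2:ℤ) * z + 1 ≠ 0 := by omega
      rcases (abs_pos (a := 2*z+1)).2 this with h
      omega
    calc (1:ℝ) = ((1:ℤ):ℝ) := by norm_num
      _ ≤ ((|2 * z + 1| : ℤ) : ℝ) := by exact_mod_cast h1
      _ = |2 * (z:ℝ) + 1| := by push_cast; rfl
  have hbig : 1 / (2 * (k : ℝ)) ≤ |(dd n k)⁻¹ - X| := by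
    rw [hval, abs_div, abs_of_pos (by positivity : (0:ℝ) < 2 * (k:ℝ))]
    rw [div_le_div_iff₀ (by positivity) (by positivity)]
    nlinarith
  linarith

end Arith



section Main

variable {Y : Type*} [MetricSpace Y] {ι : Type*}

/-- one member of the `i`-th family -/
def Mem (w : ι → Set Y) (n k : ℕ) (i : Fin k) (v : Fin (n + 1) → ℤ) (S : Finset ι) : Set Y :=
  {x | (∀ c : Fin (n + 1), th w n c x ∈
      Ioo (lo n k i (v c) + wd n k) (lo n k i (v c) + dd n k - wd n k)) ∧ x ∈ SecSet w S}

/-- the `i`-th family -/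
def Fam (w : ι → Set Y) (n k : ℕ) (i : Fin k) : Set (Set Y) :=
  {U | ∃ (v : Fin (n + 1) → ℤ) (c : Fin (n + 1)) (S : Finset ι),
    IsLeast {c' : Fin (n + 1) | kap n k ≤ lo n k i (v c')} c ∧
    S.card = (c : ℕ) + 1 ∧ U = Mem w n k i v S}

variable {w : ι → Set Y} {n k : ℕ}
variable (hk : n + 1 ≤ k)
variable (hopen : ∀ b, IsOpen (w b)) (hproper : ∀ b, ((w b)ᶜ).Nonempty)
variable (hcover : ∀ x : Y, ∃ b, x ∈ w b)
variable (horder : ∀ x : Y, {b | x ∈ w b}.Finite ∧ {b | x ∈ w b}.ncard ≤ n + 1)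

include hopen hproper hcover horder in
lemma Mem_isOpen (i : Fin k) (v : Fin (n + 1) → ℤ) (S : Finset ι) :
    IsOpen (Mem w n k i v S) := by
  have : Mem w n k i v S =
      (⋂ c : Fin (n + 1), th w n c ⁻¹'
        Ioo (lo n k i (v c) + wd n k) (lo n k i (v c) + dd n k - wd n k)) ∩ SecSet w S := by
    ext x
    simp only [Mem, mem_inter_iff, mem_iInter, mem_preimage, mem_setOf_eq]
  rw [this]
  refine IsOpen.inter ?_ (isOpen_SecSet w S)
  exact isOpen_iInter_of_finite fun c =>
    (isOpen_Ioo).preimage (continuous_th hopen hproper hcover horder c)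

lemma Fam_refines {i : Fin k} {U : Set Y} (hU : U ∈ Fam w n k i) : ∃ b, U ⊆ w b := by
  obtain ⟨v, c, S, _, hcard, rfl⟩ := hU
  have hSne : S.Nonempty := Finset.card_pos.1 (by omega)
  obtain ⟨b, hb⟩ := hSne
  exact ⟨b, fun x hx => mem_of_mem_SecSet hx.2 hb⟩

include hk hopen hproper hcover horder in
lemma Fam_covers (s : Finset (Fin k)) (hs : s.card = n + 1) (x : Y) :
    ∃ i ∈ s, ∃ U ∈ Fam w n k i, x ∈ U := by
  classical
  have hdd := dd_pos (n := n) (k := k)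
  have hwd := wd_pos hk
  have hkap := kap_pos hk
  -- first find an index i in s for which no coordinate is aligned
  have hexi : ∃ i ∈ s, ∀ c : Fin (n + 1), ¬∃ m : ℤ, |th w n c x - lo n k i m| ≤ wd n k := by
    by_contra hcon
    push_neg at hcon
    -- every i ∈ s has an aligned coordinate
    have hch : ∀ i : {j : Fin k // j ∈ s}, ∃ (c : Fin (n + 1)) (m : ℤ),
        |th w n c x - lo n k (i : Fin k) m| ≤ wd n k := fun i => hcon i i.2
    choose cc mz hcm using hch
    have hinj : Function.Injective cc := by
      intro i j hij
      by_contra hne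
      have hne' : (i : Fin k) ≠ (j : Fin k) := fun h => hne (Subtype.ext h)
      have h1 := hcm i
      have h2 := hcm j
      rw [hij] at h1
      exact nets_disj hk hne' h1 h2
    have hcards : Fintype.card {j : Fin k // j ∈ s} = Fintype.card (Fin (n + 1)) := by
      rw [Fintype.card_coe, hs, Fintype.card_fin]
    have hbij : Function.Bijective cc :=
      (Fintype.bijective_iff_injective_and_card cc).2 ⟨hinj, hcards⟩
    set e := Equiv.ofBijective cc hbij with he
    refine sum_obstr hk (fun c => mz (e.symm c)) (fun c => (e.symm c : Fin k))
      (fun c => th w n c x) (th_sum hopen hproper hcover horder x) fun c => ?_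
    have : cc (e.symm c) = c := e.apply_symm_apply c
    have h3 := hcm (e.symm c)
    rw [this] at h3
    exact h3
  obtain ⟨i, his, hun⟩ := hexi
  -- all coordinates are in gaps: define v
  have hv : ∀ c : Fin (n + 1), ∃ m : ℤ,
      lo n k i m + wd n k < th w n c x ∧ th w n c x < lo n k i m + dd n k - wd n k := by
    intro c
    rcases gaps hk (th w n c x) i with h | h
    · exact absurd h (hun c)
    · exact h
  choose v hv1 hv2 using hv
  -- pigeonhole color
  obtain ⟨cstar, hcstar⟩ := th_max hopen hproper hcover horder x
  have hkstar : kap n k ≤ lo n k i (v cstar) := by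
    have := hv2 cstar
    rw [kap]
    linarith
  -- the least element of the set of admissible colors
  set P : Finset (Fin (n + 1)) := Finset.univ.filter fun c' => kap n k ≤ lo n k i (v c') with hP
  have hPne : P.Nonempty := ⟨cstar, by simp [hP, hkstar]⟩
  set c0 : Fin (n + 1) := P.min' hPne with hc0
  have hleast : IsLeast {c' : Fin (n + 1) | kap n k ≤ lo n k i (v c')} c0 := by
    constructor
    · have := P.min'_mem hPne
      simp only [hP, Finset.mem_filter] at this
      exact this.2
    · intro c' hc'
      exact P.min'_le c' (by simp only [hP, Finset.mem_filter, Finset.mem_univ, true_and]; exact hc')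
  -- the sector
  have hpos : 0 < th w n c0 x := by
    have h1 := hv1 c0
    have h2 := hleast.1
    simp only [mem_setOf_eq] at h2
    linarith
  obtain ⟨S0, hS0card, hS0⟩ := th_pos_sector hopen hproper hcover horder hpos
  refine ⟨i, his, Mem w n k i v S0, ⟨v, c0, S0, hleast, hS0card, rfl⟩, ?_⟩
  exact ⟨fun c => ⟨hv1 c, hv2 c⟩, hS0⟩

include hk hopen hproper hcover horder in
lemma Fam_discrete (i : Fin k) : ∀ y : Y, ∃ V ∈ nhds y,
    {U | U ∈ Fam w n k i ∧ (U ∩ V).Nonempty}.Subsingleton := by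
  classical
  intro y
  have hdd := dd_pos (n := n) (k := k)
  have hwd := wd_pos hk
  have hkap := kap_pos hk
  -- per-color neighborhoods
  have hchoice : ∀ c : Fin (n + 1), ∃ Nc : Set Y, IsOpen Nc ∧ y ∈ Nc ∧
      ((∀ z ∈ Nc, th w n c z < kap n k + wd n k) ∨
       (∃ S0 : Finset ι, S0.card = (c : ℕ) + 1 ∧ Nc = SecSet w S0)) := by
    intro c
    by_cases hcase : th w n c y < kap n k + wd n k
    · refine ⟨th w n c ⁻¹' Iio (kap n k + wd n k), ?_, hcase, Or.inl fun z hz => hz⟩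
      exact isOpen_Iio.preimage (continuous_th hopen hproper hcover horder c)
    · push_neg at hcase
      have hpos : 0 < th w n c y := by linarith
      obtain ⟨S0, hS0c, hS0⟩ := th_pos_sector hopen hproper hcover horder hpos
      exact ⟨SecSet w S0, isOpen_SecSet w S0, hS0, Or.inr ⟨S0, hS0c, rfl⟩⟩
  choose NN hNopen hNmem hNprop using hchoice
  set N : Set Y := (⋂ c : Fin (n + 1), th w n c ⁻¹'
      Ioo (th w n c y - wd n k) (th w n c y + wd n k)) ∩ ⋂ c : Fin (n + 1), NN c with hN
  have hNopen' : IsOpen N := by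
    refine IsOpen.inter ?_ (isOpen_iInter_of_finite hNopen)
    exact isOpen_iInter_of_finite fun c =>
      isOpen_Ioo.preimage (continuous_th hopen hproper hcover horder c)
  have hNy : y ∈ N := by
    constructor
    · exact mem_iInter.2 fun c => by
        simp only [mem_preimage, mem_Ioo]
        constructor <;> linarith
    · exact mem_iInter.2 fun c => hNmem c
  refine ⟨N, hNopen'.mem_nhds hNy, ?_⟩
  rintro U1 ⟨⟨v1, c1, S1, hl1, hcard1, rfl⟩, z1, hz1m, hz1N⟩
    U2 ⟨⟨v2, c2, S2, hl2, hcard2, rfl⟩, z2, hz2m, hz2N⟩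
  -- the windows pin down v
  have hwin : ∀ (z : Y), z ∈ N → ∀ c : Fin (n + 1), |th w n c z - th w n c y| < wd n k := by
    intro z hz c
    have := mem_iInter.1 hz.1 c
    simp only [mem_preimage, mem_Ioo] at this
    rw [abs_lt]
    constructor <;> linarith [this.1, this.2]
  have hveq : v1 = v2 := by
    funext c
    exact gap_window hk (hz1m.1 c) (hwin z1 hz1N c) (hz2m.1 c) (hwin z2 hz2N c)
  subst hveq
  have hceq : c1 = c2 := hl1.unique hl2
  subst hceq
  -- branch analysis at color c1
  rcases hNprop c1 with hbad | ⟨S0, hS0c, hS0eq⟩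
  · exfalso
    have hz1NN : z1 ∈ NN c1 := mem_iInter.1 hz1N.2 c1
    have h1 : th w n c1 z1 < kap n k + wd n k := hbad z1 hz1NN
    have h2 : lo n k i (v1 c1) + wd n k < th w n c1 z1 := (hz1m.1 c1).1
    have h3 : kap n k ≤ lo n k i (v1 c1) := hl1.1
    linarith
  · have hz1NN : z1 ∈ NN c1 := mem_iInter.1 hz1N.2 c1
    have hz2NN : z2 ∈ NN c1 := mem_iInter.1 hz2N.2 c1
    rw [hS0eq] at hz1NN hz2NN
    have hS1 : S1 = S0 := by
      by_contra hne
      exact SecSet_disjoint (by omega : S1.card = S0.card) hne hz1m.2 hz1NN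
    have hS2 : S2 = S0 := by
      by_contra hne
      exact SecSet_disjoint (by omega : S2.card = S0.card) hne hz2m.2 hz2NN
    rw [hS1, hS2]

end Main



end Ostrand13Aux

open Ostrand13Aux Set

/-- Ostrand's covering theorem: a metric space has covering dimension `≤ n` iff
for every open cover `𝒞` and every `k ≥ n + 1` there are `k` discrete families
of open sets such that the union of any `n + 1` of them covers `Y` and refines
`𝒞`. -/
theorem stmt13 {Y : Type*} [MetricSpace Y] (n : ℕ) :
    CovDimLE Y n ↔
      ∀ 𝒞 : Set (Set Y), (∀ U ∈ 𝒞, IsOpen U) → ⋃₀ 𝒞 = Set.univ →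
        ∀ k : ℕ, n + 1 ≤ k →
          ∃ 𝒰 : Fin k → Set (Set Y),
            (∀ i, (∀ U ∈ 𝒰 i, IsOpen U) ∧ IsDiscreteFamily (𝒰 i)) ∧
            ∀ s : Finset (Fin k), s.card = n + 1 →
              ⋃₀ (⋃ i ∈ s, 𝒰 i) = Set.univ ∧
              ∀ U ∈ ⋃ i ∈ s, 𝒰 i, ∃ C ∈ 𝒞, U ⊆ C := by
  classical
  constructor
  · -- forward direction
    intro hdim 𝒞 hCopen hCcov k hk
    by_cases htriv : ∃ C ∈ 𝒞, C = univ
    · -- trivial case: some member of the cover is everything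
      obtain ⟨C0, hC0, hC0univ⟩ := htriv
      refine ⟨fun _ => {univ}, fun i => ⟨?_, ?_⟩, fun s hs => ⟨?_, ?_⟩⟩
      · rintro U rfl
        exact isOpen_univ
      · intro y
        refine ⟨univ, Filter.univ_mem, ?_⟩
        intro U hU U' hU'
        rcases hU with ⟨rfl, -⟩
        rcases hU' with ⟨rfl, -⟩
        rfl
      · have hsne : s.Nonempty := Finset.card_pos.1 (by omega)
        obtain ⟨i, hi⟩ := hsne
        apply eq_univ_of_univ_subset
        intro x _
        exact mem_sUnion.2 ⟨univ, mem_iUnion₂.2 ⟨i, hi, rfl⟩, mem_univ x⟩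
      · intro U hU
        rcases mem_iUnion₂.1 hU with ⟨i, -, rfl⟩
        exact ⟨C0, hC0, by rw [hC0univ]⟩
    · -- main case
      push_neg at htriv
      obtain ⟨𝒱, hVopen, hVcover, hVref, hVord⟩ := hdim 𝒞 hCopen hCcov
      set ι : Type _ := {V : Set Y // V ∈ 𝒱} with hι
      set w : ι → Set Y := fun b => (b : Set Y) with hw
      have hopen : ∀ b : ι, IsOpen (w b) := fun b => hVopen b b.2
      have hproper : ∀ b : ι, ((w b)ᶜ).Nonempty := by
        intro b
        obtain ⟨C, hC, hbC⟩ := hVref b b.2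
        obtain ⟨z, hz⟩ := Set.ne_univ_iff_exists_notMem C |>.1 (htriv C hC)
        exact ⟨z, fun hzb => hz (hbC hzb)⟩
      have hcover : ∀ x : Y, ∃ b : ι, x ∈ w b := by
        intro x
        have : x ∈ ⋃₀ 𝒱 := by rw [hVcover]; exact mem_univ x
        obtain ⟨V, hV, hxV⟩ := this
        exact ⟨⟨V, hV⟩, hxV⟩
      have horder : ∀ x : Y, {b : ι | x ∈ w b}.Finite ∧ {b : ι | x ∈ w b}.ncard ≤ n + 1 := by
        intro x
        obtain ⟨hfin, hcard⟩ := hVord x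
        have himg : Subtype.val '' {b : ι | x ∈ w b} = {V ∈ 𝒱 | x ∈ V} := by
          ext V
          constructor
          · rintro ⟨b, hb, rfl⟩
            exact ⟨b.2, hb⟩
          · rintro ⟨hV, hxV⟩
            exact ⟨⟨V, hV⟩, hxV, rfl⟩
        constructor
        · have : {b : ι | x ∈ w b} = Subtype.val ⁻¹' {V ∈ 𝒱 | x ∈ V} := by
            ext b
            simp only [mem_preimage, mem_setOf_eq, mem_sep_iff]
            exact ⟨fun h => ⟨b.2, h⟩, fun h => h.2⟩
          rw [this]
          exact hfin.preimage (Subtype.val_injective.injOn)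
        · calc {b : ι | x ∈ w b}.ncard
              = (Subtype.val '' {b : ι | x ∈ w b}).ncard :=
                (ncard_image_of_injective _ Subtype.val_injective).symm
            _ = {V ∈ 𝒱 | x ∈ V}.ncard := by rw [himg]
            _ ≤ n + 1 := hcard
      refine ⟨fun i => Fam w n k i, fun i => ⟨?_, ?_⟩, fun s hs => ⟨?_, ?_⟩⟩
      · rintro U ⟨v, c, S, -, -, rfl⟩
        exact Mem_isOpen hopen hproper hcover horder i v S
      · intro y
        obtain ⟨V, hV, hsub⟩ := Fam_discrete hk hopen hproper hcover horder i y
        exact ⟨V, hV, hsub⟩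
      · apply eq_univ_of_univ_subset
        intro x _
        obtain ⟨i, his, U, hU, hxU⟩ := Fam_covers hk hopen hproper hcover horder s hs x
        exact mem_sUnion.2 ⟨U, mem_iUnion₂.2 ⟨i, his, hU⟩, hxU⟩
      · intro U hU
        rcases mem_iUnion₂.1 hU with ⟨i, -, hUi⟩
        obtain ⟨b, hb⟩ := Fam_refines hUi
        obtain ⟨C, hC, hbC⟩ := hVref b b.2
        exact ⟨C, hC, hb.trans hbC⟩
  · -- backward direction
    intro hRHS 𝒞 hCopen hCcov
    obtain ⟨𝒰, h1, h2⟩ := hRHS 𝒞 hCopen hCcov (n + 1) (le_refl _)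
    have hscard : (Finset.univ : Finset (Fin (n + 1))).card = n + 1 := by
      rw [Finset.card_univ, Fintype.card_fin]
    obtain ⟨hcov, href⟩ := h2 Finset.univ hscard
    set 𝒱 : Set (Set Y) := ⋃ i : Fin (n + 1), 𝒰 i with hV
    have hVU : (⋃ i ∈ (Finset.univ : Finset (Fin (n+1))), 𝒰 i) = 𝒱 := by
      simp [hV]
    refine ⟨𝒱, ?_, ?_, ?_, ?_⟩
    · intro V hV'
      rcases mem_iUnion.1 hV' with ⟨i, hi⟩
      exact (h1 i).1 V hi
    · rw [← hVU]; exact hcov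
    · intro V hV'
      rcases mem_iUnion.1 hV' with ⟨i, hi⟩
      exact href V (mem_iUnion₂.2 ⟨i, Finset.mem_univ i, hi⟩)
    · intro x
      -- each family contributes at most one member containing x
      have hsub : ∀ i : Fin (n + 1), {V ∈ 𝒰 i | x ∈ V}.Subsingleton := by
        intro i
        obtain ⟨V0, hV0, hss⟩ := (h1 i).2 x
        have hxV0 : x ∈ V0 := mem_of_mem_nhds hV0
        intro U hU U' hU'
        exact hss ⟨hU.1, ⟨x, hU.2, hxV0⟩⟩ ⟨hU'.1, ⟨x, hU'.2, hxV0⟩⟩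
      have hTeq : {V ∈ 𝒱 | x ∈ V} = ⋃ i : Fin (n + 1), {V ∈ 𝒰 i | x ∈ V} := by
        ext V
        constructor
        · rintro ⟨hV', hxV⟩
          rcases mem_iUnion.1 hV' with ⟨i, hi⟩
          exact mem_iUnion.2 ⟨i, hi, hxV⟩
        · intro h
          rcases mem_iUnion.1 h with ⟨i, hi, hxV⟩
          exact ⟨mem_iUnion.2 ⟨i, hi⟩, hxV⟩
      have hfin : {V ∈ 𝒱 | x ∈ V}.Finite := by
        rw [hTeq]
        exact finite_iUnion fun i => (hsub i).finite
      refine ⟨hfin, ?_⟩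
      -- injection into Fin (n+1)
      have hmap : ∀ V ∈ {V ∈ 𝒱 | x ∈ V}, ∃ i : Fin (n + 1), V ∈ 𝒰 i ∧ x ∈ V := by
        rintro V ⟨hV', hxV⟩
        rcases mem_iUnion.1 hV' with ⟨i, hi⟩
        exact ⟨i, hi, hxV⟩
      choose! F hF1 hF2 using hmap
      have hinj : InjOn F {V ∈ 𝒱 | x ∈ V} := by
        intro V hVm V' hVm' hFeq
        exact hsub (F V) ⟨hF1 V hVm, hF2 V hVm⟩
          (by rw [hFeq]; exact ⟨hF1 V' hVm', hF2 V' hVm'⟩)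
      calc {V ∈ 𝒱 | x ∈ V}.ncard
          ≤ (univ : Set (Fin (n + 1))).ncard := by
            refine ncard_le_ncard_of_injOn F (fun V _ => mem_univ _) hinj ?_
            exact finite_univ
        _ = n + 1 := by rw [ncard_univ, Nat.card_eq_fintype_card, Fintype.card_fin]
end
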